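/- arXiv:2009.01204 — 4 statements merged into one kernel-verified Lean document; each statement's English description precedes it below -/
import Mathlib

section
/- Let f : [L, ∞) → (0,∞) be monotone with a f(j+1) ≤ f(j) ≤ b f(j+1) for all integers j ≥ L, where a, b > 0 and L is a positive integer. Then for every real r > L+1, the sum Σ_{x ∈ Z^d, L ≤ ‖x‖ ≤ r} f(‖x‖) is bounded above and below by constant multiples (depending only on d, a, b) of the integral ∫_{L ≤ ‖x‖ ≤ r} f(‖x‖) dx = σ_d ∫_L^r f(t) t^{d-1} dt, where σ_d is the surface area of the unit sphere in R^d. -/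
open MeasureTheory

noncomputable def znorm {d : ℕ} (x : Fin d → ℤ) : ℝ :=
  Real.sqrt (∑ i, ((x i : ℝ)) ^ 2)

def zsq {d : ℕ} (x : Fin d → ℤ) : ℤ := ∑ i, (x i) ^ 2

lemma zsq_nonneg {d : ℕ} (x : Fin d → ℤ) : 0 ≤ zsq x :=
  Finset.sum_nonneg fun i _ => sq_nonneg _

lemma znorm_eq {d : ℕ} (x : Fin d → ℤ) : znorm x = Real.sqrt ((zsq x : ℝ)) := by
  unfold znorm zsq; push_cast; ring_nf

lemma znorm_nonneg {d : ℕ} (x : Fin d → ℤ) : 0 ≤ znorm x := Real.sqrt_nonneg _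

lemma le_znorm_iff {d : ℕ} (x : Fin d → ℤ) {c : ℝ} (hc : 0 ≤ c) :
    c ≤ znorm x ↔ c ^ 2 ≤ (zsq x : ℝ) := by
  rw [znorm_eq]
  exact Real.le_sqrt hc (by exact_mod_cast zsq_nonneg x)

lemma znorm_lt_iff {d : ℕ} (x : Fin d → ℤ) {c : ℝ} (hc : 0 < c) :
    znorm x < c ↔ (zsq x : ℝ) < c ^ 2 := by
  rw [znorm_eq]; exact Real.sqrt_lt' hc

lemma znorm_le_iff {d : ℕ} (x : Fin d → ℤ) {c : ℝ} (hc : 0 ≤ c) :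
    znorm x ≤ c ↔ (zsq x : ℝ) ≤ c ^ 2 := by
  rw [znorm_eq]; exact Real.sqrt_le_left hc

lemma abs_coord_le_znorm {d : ℕ} (x : Fin d → ℤ) (i : Fin d) : |(x i : ℝ)| ≤ znorm x := by
  rw [znorm_eq, show |(x i : ℝ)| = Real.sqrt (((x i)^2 : ℤ) : ℝ) by push_cast; rw [Real.sqrt_sq_eq_abs]]
  apply Real.sqrt_le_sqrt
  exact_mod_cast Finset.single_le_sum (f := fun i => (x i)^2) (fun i _ => sq_nonneg _) (Finset.mem_univ i)

lemma coord_sq_le_zsq {d : ℕ} (x : Fin d → ℤ) (i : Fin d) : (x i)^2 ≤ zsq x :=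
  Finset.single_le_sum (f := fun i => (x i)^2) (fun i _ => sq_nonneg _) (Finset.mem_univ i)

lemma zsq_update {d : ℕ} (x : Fin d → ℤ) (i : Fin d) :
    zsq x = (x i)^2 + zsq (Function.update x i 0) := by
  unfold zsq
  have h : ∀ k, (Function.update x i 0 k)^2 = Function.update (fun k => (x k)^2) i 0 k := by
    intro k
    by_cases hk : k = i
    · subst hk; simp
    · simp [Function.update_of_ne hk]
  rw [Finset.sum_congr rfl (fun k _ => h k), Finset.sum_update_of_mem (Finset.mem_univ i)]
  rw [← Finset.sum_erase_add _ _ (Finset.mem_univ i)]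
  simp [Finset.sdiff_singleton_eq_erase]

-- counting integers z with j² ≤ (D+1)z², j² ≤ z²+Q, z²+Q < (j+1)²
lemma fiberT_card (D : ℕ) (j : ℕ) (hj : 1 ≤ j) (Q : ℤ) (T : Finset ℤ)
    (hT : ∀ z ∈ T, (j:ℤ)^2 ≤ ((D:ℤ)+1) * z^2 ∧ (j:ℤ)^2 ≤ z^2 + Q ∧ z^2 + Q < ((j:ℤ)+1)^2) :
    T.card ≤ 2 * (D + 2) := by
  classical
  have key : ∀ z ∈ T, ∀ z' ∈ T, (z.natAbs : ℤ) ≤ (z'.natAbs : ℤ) + (D + 1) := by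
    intro z hz z' hz'
    obtain ⟨h1, h2, h3⟩ := hT z hz
    obtain ⟨h1', h2', h3'⟩ := hT z' hz'
    set w : ℤ := (z.natAbs : ℤ) with hw
    set w' : ℤ := (z'.natAbs : ℤ) with hw'
    have hzw : z^2 = w^2 := by rw [hw]; exact_mod_cast (Int.natAbs_sq z).symm
    have hzw' : z'^2 = w'^2 := by rw [hw']; exact_mod_cast (Int.natAbs_sq z').symm
    have hw0 : 0 ≤ w := Int.ofNat_nonneg _
    have hw0' : 0 ≤ w' := Int.ofNat_nonneg _
    have hD : (0:ℤ) ≤ D := Int.ofNat_nonneg _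
    have hj1 : (1:ℤ) ≤ (j:ℤ) := by exact_mod_cast hj
    have hu2 : (j:ℤ)^2 ≤ (((D:ℤ)+1)*w)^2 := by nlinarith [mul_nonneg hD (sq_nonneg w)]
    have hu2' : (j:ℤ)^2 ≤ (((D:ℤ)+1)*w')^2 := by nlinarith [mul_nonneg hD (sq_nonneg w')]
    have hb : (j:ℤ) ≤ ((D:ℤ)+1) * w := by
      have := (pow_le_pow_iff_left₀ (by linarith : (0:ℤ) ≤ (j:ℤ)) (by positivity) (two_ne_zero)).mp hu2
      exact this
    have hb' : (j:ℤ) ≤ ((D:ℤ)+1) * w' := by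
      have := (pow_le_pow_iff_left₀ (by linarith : (0:ℤ) ≤ (j:ℤ)) (by positivity) (two_ne_zero)).mp hu2'
      exact this
    -- w² − w'² ≤ 2j
    have hdiff : w^2 - w'^2 ≤ 2*(j:ℤ) := by nlinarith
    -- conclude
    nlinarith [mul_le_mul_of_nonneg_left hdiff (by linarith : (0:ℤ) ≤ (D:ℤ)+1)]
  calc T.card ≤ 2 * (T.image Int.natAbs).card := by
        apply Finset.card_le_mul_card_image
        intro n hn
        have hsub : T.filter (fun z => z.natAbs = n) ⊆ ({(n:ℤ), -(n:ℤ)} : Finset ℤ) := by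
          intro z hz
          rw [Finset.mem_filter] at hz
          rcases Int.natAbs_eq z with h | h
          · exact Finset.mem_insert.mpr (Or.inl (by rw [h, hz.2]))
          · simp only [Finset.mem_insert, Finset.mem_singleton]
            right; rw [h, hz.2]
        refine (Finset.card_le_card hsub).trans ?_
        refine (Finset.card_insert_le _ _).trans ?_
        rw [Finset.card_singleton]
      _ ≤ 2 * (D + 2) := by
        rcases Finset.eq_empty_or_nonempty (T.image Int.natAbs) with h | h
        · simp [h]
        gcongr 2 * ?_
        set n₀ := (T.image Int.natAbs).min' h with hn₀
        have hmem := (T.image Int.natAbs).min'_mem h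
        obtain ⟨z₀, hz₀, hz₀'⟩ := Finset.mem_image.mp hmem
        have hsub : T.image Int.natAbs ⊆ Finset.Icc n₀ (n₀ + (D+1)) := by
          intro n hn
          obtain ⟨z, hz, hz'⟩ := Finset.mem_image.mp hn
          rw [Finset.mem_Icc]
          refine ⟨Finset.min'_le _ _ hn, ?_⟩
          have := key z hz z₀ hz₀
          rw [hz', hz₀'] at this
          exact_mod_cast this
        refine (Finset.card_le_card hsub).trans ?_
        rw [Nat.card_Icc]
        omega

lemma shell_card_le (D : ℕ) (j : ℕ) (hj : 1 ≤ j) (s : Finset (Fin (D+1) → ℤ))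
    (hs : ∀ x ∈ s, (j:ℤ)^2 ≤ zsq x ∧ zsq x < ((j:ℤ)+1)^2) :
    s.card ≤ (D+1) * (2*(D+2)) * (2*j+3)^D := by
  classical
  have hcoord : ∀ x ∈ s, ∀ k, x k ∈ Finset.Icc (-(j:ℤ)-1) ((j:ℤ)+1) := by
    intro x hx k
    obtain ⟨h1, h2⟩ := hs x hx
    have := coord_sq_le_zsq x k
    rw [Finset.mem_Icc]
    constructor <;> nlinarith
  have hcover : s ⊆ Finset.univ.biUnion
      (fun i : Fin (D+1) => s.filter (fun x => (j:ℤ)^2 ≤ ((D:ℤ)+1) * (x i)^2)) := by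
    intro x hx
    obtain ⟨h1, h2⟩ := hs x hx
    obtain ⟨i, _, hi⟩ := Finset.exists_max_image Finset.univ (fun i => (x i)^2)
      ⟨⟨0, Nat.succ_pos D⟩, Finset.mem_univ _⟩
    refine Finset.mem_biUnion.mpr ⟨i, Finset.mem_univ i, Finset.mem_filter.mpr ⟨hx, ?_⟩⟩
    have hsum : zsq x ≤ ((D:ℤ)+1) * (x i)^2 := by
      have h := Finset.sum_le_card_nsmul Finset.univ (fun k => (x k)^2) ((x i)^2)
        (fun k _ => hi k (Finset.mem_univ k))
      rw [Finset.card_univ, Fintype.card_fin, nsmul_eq_mul] at h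
      rw [zsq]
      exact_mod_cast h
    linarith
  refine (Finset.card_le_card hcover).trans ((Finset.card_biUnion_le).trans ?_)
  have hone : ∀ i : Fin (D+1),
      (s.filter (fun x => (j:ℤ)^2 ≤ ((D:ℤ)+1) * (x i)^2)).card ≤ (2*(D+2)) * (2*j+3)^D := by
    intro i
    set si := s.filter (fun x => (j:ℤ)^2 ≤ ((D:ℤ)+1) * (x i)^2) with hsi
    set Bi := Fintype.piFinset (fun k : Fin (D+1) =>
      if k = i then ({0} : Finset ℤ) else Finset.Icc (-(j:ℤ)-1) ((j:ℤ)+1)) with hBi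
    have hmaps : ∀ x ∈ si, Function.update x i 0 ∈ Bi := by
      intro x hx
      rw [hBi, Fintype.mem_piFinset]
      intro k
      by_cases hk : k = i
      · subst hk; simp
      · simp only [if_neg hk, Function.update_of_ne hk]
        exact hcoord x (Finset.mem_filter.mp hx).1 k
    rw [Finset.card_eq_sum_card_fiberwise hmaps]
    have hfib : ∀ y ∈ Bi, (si.filter (fun x => Function.update x i 0 = y)).card ≤ 2*(D+2) := by
      intro y hy
      set Q := zsq y with hQ
      set T := (Finset.Icc (-(j:ℤ)-1) ((j:ℤ)+1)).filter
        (fun z => (j:ℤ)^2 ≤ ((D:ℤ)+1) * z^2 ∧ (j:ℤ)^2 ≤ z^2 + Q ∧ z^2 + Q < ((j:ℤ)+1)^2) with hT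
      have hinj : (si.filter (fun x => Function.update x i 0 = y)).card ≤ T.card := by
        apply Finset.card_le_card_of_injOn (fun x => x i)
        · intro x hx
          rw [Finset.mem_coe, Finset.mem_filter] at hx
          obtain ⟨hxsi, hxy⟩ := hx
          obtain ⟨hxs, hxcond⟩ := Finset.mem_filter.mp hxsi
          obtain ⟨hx1, hx2⟩ := hs x hxs
          have hdecomp : zsq x = (x i)^2 + Q := by
            rw [hQ, ← hxy]; exact zsq_update x i
          rw [hT, Finset.mem_coe, Finset.mem_filter]
          exact ⟨hcoord x hxs i, hxcond, by rw [← hdecomp]; exact hx1, by rw [← hdecomp]; exact hx2⟩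
        · intro x hx x' hx' hxx
          simp only [Finset.coe_filter, Set.mem_setOf_eq] at hx hx'
          funext k
          by_cases hk : k = i
          · subst hk; exact hxx
          · have := congrFun (hx.2.trans hx'.2.symm) k
            simpa [Function.update_of_ne hk] using this
      refine hinj.trans (fiberT_card D j hj Q T ?_)
      intro z hz
      exact (Finset.mem_filter.mp hz).2
    have hsum := Finset.sum_le_card_nsmul Bi _ (2*(D+2)) hfib
    rw [smul_eq_mul] at hsum
    refine hsum.trans ?_
    have hBcard : Bi.card = (2*j+3)^D := by
      rw [hBi, Fintype.card_piFinset]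
      rw [← Finset.mul_prod_erase Finset.univ _ (Finset.mem_univ i)]
      rw [if_pos rfl, Finset.card_singleton, one_mul]
      have : ∀ k ∈ Finset.univ.erase i,
          (if k = i then ({0} : Finset ℤ) else Finset.Icc (-(j:ℤ)-1) ((j:ℤ)+1)).card = 2*j+3 := by
        intro k hk
        rw [if_neg (Finset.mem_erase.mp hk).1, Int.card_Icc]
        omega
      rw [Finset.prod_congr rfl this, Finset.prod_const, Finset.card_erase_of_mem (Finset.mem_univ i),
        Finset.card_univ, Fintype.card_fin]
      norm_num
    rw [hBcard]
    ring_nf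
    exact le_refl _
  refine (Finset.sum_le_card_nsmul _ _ _ (fun i _ => hone i)).trans ?_
  rw [smul_eq_mul, Finset.card_univ, Fintype.card_fin]
  ring_nf
  exact le_refl _

lemma zsq_cons {D : ℕ} (c : ℤ) (y : Fin D → ℤ) :
    zsq (Fin.cons c y) = c^2 + zsq y := by
  unfold zsq
  rw [Fin.sum_univ_succ]
  simp

lemma shell_exists (D : ℕ) (j : ℕ) (hj : 1 ≤ j) :
    ∃ s : Finset (Fin (D+1) → ℤ),
      (∀ x ∈ s, (j:ℤ)^2 ≤ zsq x ∧ zsq x < ((j:ℤ)+1)^2) ∧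
      ((j:ℝ) / (2*((D:ℝ)+1)))^D ≤ (s.card : ℝ) := by
  classical
  set m : ℕ := j / (2*(D+1)) with hm
  set B : Finset (Fin D → ℤ) := Fintype.piFinset (fun _ : Fin D => Finset.Icc (-(m:ℤ)) m) with hB
  have hq4 : ∀ y ∈ B, 4 * zsq y ≤ (j:ℤ)^2 := by
    intro y hy
    have hy' : ∀ k, (y k)^2 ≤ (m:ℤ)^2 := by
      intro k
      have := (Fintype.mem_piFinset.mp hy) k
      rw [Finset.mem_Icc] at this
      nlinarith [this.1, this.2]
    have hsum : zsq y ≤ (D:ℤ) * (m:ℤ)^2 := by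
      have h := Finset.sum_le_card_nsmul Finset.univ (fun k => (y k)^2) ((m:ℤ)^2)
        (fun k _ => hy' k)
      rw [Finset.card_univ, Fintype.card_fin, nsmul_eq_mul] at h
      exact h
    have hmj : 2*(D+1)*m ≤ j := by
      have h := Nat.div_mul_le_self j (2*(D+1))
      calc 2*(D+1)*m = m * (2*(D+1)) := by ring
        _ ≤ j := by rw [hm]; exact h
    have hmj' : (2*((D:ℤ)+1))*(m:ℤ) ≤ (j:ℤ) := by exact_mod_cast hmj
    have hD0 : (0:ℤ) ≤ (D:ℤ) := Int.ofNat_nonneg _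
    have hm0 : (0:ℤ) ≤ (m:ℤ) := Int.ofNat_nonneg _
    have hsq : (2*((D:ℤ)+1)*(m:ℤ))^2 ≤ (j:ℤ)^2 := by
      apply pow_le_pow_left₀ (by positivity) hmj'
    nlinarith [sq_nonneg ((m:ℤ)), mul_nonneg hD0 (sq_nonneg (m:ℤ))]
  set ψ : (Fin D → ℤ) → (Fin (D+1) → ℤ) :=
    fun y => Fin.cons ⌈Real.sqrt ((j:ℝ)^2 - ((zsq y : ℤ):ℝ))⌉ y with hψ
  have hmem : ∀ y ∈ B, (j:ℤ)^2 ≤ zsq (ψ y) ∧ zsq (ψ y) < ((j:ℤ)+1)^2 := by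
    intro y hy
    have h4 := hq4 y hy
    have h0q : (0:ℤ) ≤ zsq y := zsq_nonneg y
    set q : ℝ := ((zsq y : ℤ):ℝ) with hqdef
    have hq0 : 0 ≤ q := by rw [hqdef]; exact_mod_cast h0q
    have hj1 : (1:ℝ) ≤ (j:ℝ) := by exact_mod_cast hj
    have hpos : 0 < (j:ℝ)^2 - q := by
      have : 4*q ≤ (j:ℝ)^2 := by rw [hqdef]; exact_mod_cast h4
      nlinarith
    set s₀ : ℝ := Real.sqrt ((j:ℝ)^2 - q) with hs₀
    have hs₀sq : s₀^2 = (j:ℝ)^2 - q := Real.sq_sqrt hpos.le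
    have hs₀0 : 0 < s₀ := Real.sqrt_pos.mpr hpos
    have hs₀j : s₀ ≤ (j:ℝ) := by
      rw [hs₀]
      calc Real.sqrt ((j:ℝ)^2 - q) ≤ Real.sqrt ((j:ℝ)^2) := Real.sqrt_le_sqrt (by linarith)
        _ = (j:ℝ) := Real.sqrt_sq (by linarith)
    set c : ℤ := ⌈s₀⌉ with hc
    have hcs : s₀ ≤ (c:ℝ) := Int.le_ceil _
    have hcs' : (c:ℝ) < s₀ + 1 := Int.ceil_lt_add_one _
    have hzc : zsq (ψ y) = c^2 + zsq y := zsq_cons c y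
    constructor
    · have hthis : (j:ℝ)^2 ≤ (c:ℝ)^2 + q := by nlinarith
      rw [hqdef] at hthis
      rw [hzc]
      exact_mod_cast hthis
    · rcases eq_or_lt_of_le h0q with h0 | h0
      · have hq0' : q = 0 := by rw [hqdef, ← h0]; norm_num
        have : s₀ = (j:ℝ) := by rw [hs₀, hq0', sub_zero, Real.sqrt_sq (by linarith)]
        have hcj : c = (j:ℤ) := by
          rw [hc, this, show ((j:ℕ):ℝ) = (((j:ℕ):ℤ):ℝ) by push_cast; ring, Int.ceil_intCast]
        rw [hzc, hcj, ← h0]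
        nlinarith [Int.ofNat_nonneg j]
      · have hq0' : (0:ℝ) < q := by rw [hqdef]; exact_mod_cast h0
        have hs₀lt : s₀ < (j:ℝ) := by
          rw [hs₀]
          have : (j:ℝ)^2 - q < (j:ℝ)^2 := by linarith
          calc Real.sqrt ((j:ℝ)^2 - q) < Real.sqrt ((j:ℝ)^2) := Real.sqrt_lt_sqrt hpos.le this
            _ = (j:ℝ) := Real.sqrt_sq (by linarith)
        have hlt : (c:ℝ)^2 + q < ((j:ℝ)+1)^2 := by nlinarith
        rw [hqdef] at hlt
        rw [hzc]
        have hfin : ((c^2 + zsq y : ℤ):ℝ) < ((((j:ℤ)+1)^2 : ℤ):ℝ) := by push_cast; push_cast at hlt; linarith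
        exact_mod_cast hfin
  refine ⟨B.image ψ, ?_, ?_⟩
  · intro x hx
    obtain ⟨y, hy, rfl⟩ := Finset.mem_image.mp hx
    exact hmem y hy
  · have hinj : Set.InjOn ψ B := by
      intro y hy y' hy' hyy
      have := congrArg Fin.tail hyy
      rwa [hψ, Fin.tail_cons, Fin.tail_cons] at this
    rw [Finset.card_image_of_injOn hinj]
    have hBcard : B.card = (2*m+1)^D := by
      rw [hB, Fintype.card_piFinset]
      have : ∀ k ∈ (Finset.univ : Finset (Fin D)), (Finset.Icc (-(m:ℤ)) m).card = 2*m+1 := by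
        intro k _
        rw [Int.card_Icc]
        omega
      rw [Finset.prod_congr rfl this, Finset.prod_const, Finset.card_univ, Fintype.card_fin]
    rw [hBcard]
    have hle : (j:ℝ) / (2*((D:ℝ)+1)) ≤ (2*m+1 : ℕ) := by
      have hK : 0 < 2*(D+1) := by positivity
      have h1 : 2*(D+1)*m + j%(2*(D+1)) = j := by rw [hm]; exact Nat.div_add_mod j _
      have h2 : j % (2*(D+1)) < 2*(D+1) := Nat.mod_lt _ hK
      have hring : (m+1)*(2*(D+1)) = 2*(D+1)*m + 2*(D+1) := by ring
      have hlt : j < (m+1) * (2*(D+1)) := by omega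
      have hlt' : (j:ℝ) < ((m:ℝ)+1) * (2*((D:ℝ)+1)) := by exact_mod_cast hlt
      rw [div_le_iff₀ (by positivity)]
      push_cast
      nlinarith [Nat.cast_nonneg (α := ℝ) m, Nat.cast_nonneg (α := ℝ) D]
    calc ((j:ℝ) / (2*((D:ℝ)+1)))^D ≤ ((2*m+1 : ℕ):ℝ)^D := by
          apply pow_le_pow_left₀ (by positivity) hle
      _ = (((2*m+1)^D : ℕ):ℝ) := by push_cast; ring

lemma f_interval_bounds {a b : ℝ} {L : ℕ} {f : ℝ → ℝ} (ha : 0 < a) (hb : 0 < b)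
    (hpos : ∀ t : ℝ, (L : ℝ) ≤ t → 0 < f t)
    (hmono : MonotoneOn f (Set.Ici (L : ℝ)) ∨ AntitoneOn f (Set.Ici (L : ℝ)))
    (hratio : ∀ j : ℕ, L ≤ j → a * f (j + 1) ≤ f j ∧ f j ≤ b * f (j + 1))
    (j : ℕ) (hj : L ≤ j) {t : ℝ} (ht : (j:ℝ) ≤ t) (ht' : t ≤ (j:ℝ)+1) :
    f t ≤ max 1 a⁻¹ * f j ∧ min 1 b⁻¹ * f j ≤ f t := by
  have hLj : (L:ℝ) ≤ (j:ℝ) := by exact_mod_cast hj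
  have hmem_t : t ∈ Set.Ici (L:ℝ) := le_trans hLj ht
  have hmem_j : (j:ℝ) ∈ Set.Ici (L:ℝ) := Set.mem_Ici.mpr hLj
  have hmem_j1 : (j:ℝ)+1 ∈ Set.Ici (L:ℝ) := by
    simp only [Set.mem_Ici]; linarith
  have hfj : 0 < f j := hpos _ hLj
  have hfj1 : 0 < f ((j:ℝ)+1) := hpos _ (by simp only [Set.mem_Ici] at hmem_j1; exact hmem_j1)
  obtain ⟨hr1, hr2⟩ := hratio j hj
  have hup1 : f ((j:ℝ)+1) ≤ a⁻¹ * f j := by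
    rw [le_inv_mul_iff₀ ha]; linarith
  have hlow1 : b⁻¹ * f j ≤ f ((j:ℝ)+1) := by
    rw [inv_mul_le_iff₀ hb]; linarith
  rcases hmono with h | h
  · constructor
    · calc f t ≤ f ((j:ℝ)+1) := h hmem_t (by simp only [Set.mem_Ici]; linarith) ht'
        _ ≤ a⁻¹ * f j := hup1
        _ ≤ max 1 a⁻¹ * f j := mul_le_mul_of_nonneg_right (le_max_right _ _) hfj.le
    · calc min 1 b⁻¹ * f j ≤ 1 * f j := mul_le_mul_of_nonneg_right (min_le_left _ _) hfj.le
        _ = f j := one_mul _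
        _ ≤ f t := h (Set.mem_Ici.mpr hLj) hmem_t ht
  · constructor
    · calc f t ≤ f j := h (Set.mem_Ici.mpr hLj) hmem_t ht
        _ = 1 * f j := (one_mul _).symm
        _ ≤ max 1 a⁻¹ * f j := mul_le_mul_of_nonneg_right (le_max_left _ _) hfj.le
    · calc min 1 b⁻¹ * f j ≤ b⁻¹ * f j := mul_le_mul_of_nonneg_right (min_le_right _ _) hfj.le
        _ ≤ f ((j:ℝ)+1) := hlow1
        _ ≤ f t := h hmem_t (by simp only [Set.mem_Ici]; linarith) ht'

set_option maxHeartbeats 2000000 in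
/-- Comparison of lattice sums of a radial function with controlled monotonicity
with the corresponding radial integral; the constants depend only on `d`, `a`, `b`. -/
theorem lattice_sum_comparable_radial_integral
    (d : ℕ) (hd : 1 ≤ d) (a b : ℝ) (ha : 0 < a) (hb : 0 < b) :
    ∃ c C : ℝ, 0 < c ∧ 0 < C ∧
      ∀ (L : ℕ), 1 ≤ L → ∀ (f : ℝ → ℝ),
        (∀ t : ℝ, (L : ℝ) ≤ t → 0 < f t) →
        (MonotoneOn f (Set.Ici (L : ℝ)) ∨ AntitoneOn f (Set.Ici (L : ℝ))) →
        (∀ j : ℕ, L ≤ j → a * f (j + 1) ≤ f j ∧ f j ≤ b * f (j + 1)) →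
        ∀ r : ℝ, (L : ℝ) + 1 < r →
          c * ∫ t in (L : ℝ)..r, f t * t ^ (d - 1) ≤
            (∑' x : Fin d → ℤ,
              if (L : ℝ) ≤ znorm x ∧ znorm x ≤ r then f (znorm x) else 0) ∧
          (∑' x : Fin d → ℤ,
              if (L : ℝ) ≤ znorm x ∧ znorm x ≤ r then f (znorm x) else 0) ≤
            C * ∫ t in (L : ℝ)..r, f t * t ^ (d - 1) := by
  classical
  obtain ⟨D, rfl⟩ : ∃ D, d = D + 1 := ⟨d - 1, by omega⟩
  set α : ℝ := max 1 a⁻¹ with hα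
  set β : ℝ := min 1 b⁻¹ with hβ
  have hα0 : 0 < α := lt_of_lt_of_le one_pos (le_max_left _ _)
  have hβ0 : 0 < β := lt_min one_pos (by positivity)
  set Aup : ℝ := ((D:ℝ)+1) * (2*((D:ℝ)+2)) * 5^D with hAup
  set Alow : ℝ := ((2*((D:ℝ)+1))⁻¹)^D with hAlow
  have hAup0 : 0 < Aup := by positivity
  have hAlow0 : 0 < Alow := by positivity
  set E : ℝ := α * 2^D * (1 + a⁻¹ * 2^D) with hE
  have hE0 : 0 < E := by positivity
  refine ⟨β * Alow / E, α * Aup * (1 + a⁻¹ * 2^D) / β, by positivity, by positivity, ?_⟩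
  intro L hL f hpos hmono hratio r hr
  simp only [Nat.add_sub_cancel]
  -- basic facts
  have hL1 : (1:ℝ) ≤ (L:ℝ) := by exact_mod_cast hL
  have hr0 : 0 < r := by linarith
  set M : ℕ := ⌊r⌋₊ with hM
  have hMr : (M:ℝ) ≤ r := Nat.floor_le hr0.le
  have hrM : r < (M:ℝ) + 1 := Nat.lt_floor_add_one r
  have hLM : L + 1 ≤ M := Nat.le_floor (by push_cast; linarith)
  set M' : ℕ := M - 1 with hM'
  have hMM : M = M' + 1 := by omega
  have hLM' : L ≤ M' := by omega
  have hM'1 : 1 ≤ M' := by omega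
  -- integrability
  have hInt : ∀ u v : ℝ, (L:ℝ) ≤ u → u ≤ v →
      IntervalIntegrable (fun t => f t * t^D) volume u v := by
    intro u v hu huv
    have hsub : Set.uIcc u v ⊆ Set.Ici (L:ℝ) := by
      rw [Set.uIcc_of_le huv]
      intro x hx
      exact le_trans hu hx.1
    have hf : IntervalIntegrable f volume u v := by
      rcases hmono with h | h
      · exact (h.mono hsub).intervalIntegrable
      · exact (h.mono hsub).intervalIntegrable
    exact hf.mul_continuousOn (continuous_pow D).continuousOn
  -- per-interval integral bounds
  have hpiece : ∀ j : ℕ, L ≤ j →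
      (β * (f j * (j:ℝ)^D) ≤ ∫ t in (j:ℝ)..((j:ℝ)+1), f t * t^D) ∧
      ((∫ t in (j:ℝ)..((j:ℝ)+1), f t * t^D) ≤ α * 2^D * (f j * (j:ℝ)^D)) := by
    intro j hj
    have hLj : (L:ℝ) ≤ (j:ℝ) := by exact_mod_cast hj
    have hj1 : (1:ℝ) ≤ (j:ℝ) := le_trans hL1 hLj
    have hIj := hInt (j:ℝ) ((j:ℝ)+1) hLj (by linarith)
    have hfj : 0 < f j := hpos _ hLj
    constructor
    · have hmono' : ∀ t ∈ Set.Icc (j:ℝ) ((j:ℝ)+1), β * f j * (j:ℝ)^D ≤ f t * t^D := by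
        intro t ht
        obtain ⟨ht1, ht2⟩ := ht
        obtain ⟨_, hlow⟩ := f_interval_bounds ha hb hpos hmono hratio j hj ht1 ht2
        have htpos : (0:ℝ) ≤ t := by linarith
        have hpow : (j:ℝ)^D ≤ t^D := pow_le_pow_left₀ (by linarith) ht1 D
        have hflow : 0 ≤ β * f j := by positivity
        calc β * f j * (j:ℝ)^D ≤ (β * f j) * t^D := by
              exact mul_le_mul_of_nonneg_left hpow hflow
          _ ≤ f t * t^D := mul_le_mul_of_nonneg_right hlow (by positivity)
      have := intervalIntegral.integral_mono_on (by linarith : (j:ℝ) ≤ (j:ℝ)+1)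
        (intervalIntegrable_const (c := β * f j * (j:ℝ)^D)) hIj hmono'
      rw [intervalIntegral.integral_const] at this
      have heq : ((j:ℝ)+1 - (j:ℝ)) • (β * f j * (j:ℝ)^D) = β * (f j * (j:ℝ)^D) := by
        simp; ring
      rw [heq] at this
      exact this
    · have hmono' : ∀ t ∈ Set.Icc (j:ℝ) ((j:ℝ)+1), f t * t^D ≤ α * f j * (2*(j:ℝ))^D := by
        intro t ht
        obtain ⟨ht1, ht2⟩ := ht
        obtain ⟨hup, _⟩ := f_interval_bounds ha hb hpos hmono hratio j hj ht1 ht2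
        have htpos : (0:ℝ) ≤ t := by linarith
        have hpow : t^D ≤ (2*(j:ℝ))^D := pow_le_pow_left₀ htpos (by linarith) D
        have hft : 0 < f t := hpos t (by linarith)
        calc f t * t^D ≤ (α * f j) * t^D := mul_le_mul_of_nonneg_right hup (by positivity)
          _ ≤ (α * f j) * (2*(j:ℝ))^D := mul_le_mul_of_nonneg_left hpow (by positivity)
          _ = α * f j * (2*(j:ℝ))^D := rfl
      have := intervalIntegral.integral_mono_on (by linarith : (j:ℝ) ≤ (j:ℝ)+1)
        hIj (intervalIntegrable_const (c := α * f j * (2*(j:ℝ))^D)) hmono'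
      rw [intervalIntegral.integral_const] at this
      have heq : ((j:ℝ)+1 - (j:ℝ)) • (α * f j * (2*(j:ℝ))^D) = α * 2^D * (f j * (j:ℝ)^D) := by
        simp [mul_pow]; ring
      rw [heq] at this
      exact this
  -- sums of G
  set G : ℕ → ℝ := fun j => f j * (j:ℝ)^D with hG
  have hGpos : ∀ j : ℕ, L ≤ j → 0 < G j := by
    intro j hj
    have hLj : (L:ℝ) ≤ (j:ℝ) := by exact_mod_cast hj
    have : 0 < f j := hpos _ hLj
    have hj1 : (1:ℝ) ≤ (j:ℝ) := le_trans hL1 hLj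
    rw [hG]
    positivity
  set SGfull : ℝ := ∑ j ∈ Finset.Icc L M, G j with hSGfull
  set SG1 : ℝ := ∑ j ∈ Finset.Icc L M', G j with hSG1
  have hSG10 : 0 < SG1 := by
    rw [hSG1]
    apply Finset.sum_pos
    · intro j hj
      exact hGpos j (Finset.mem_Icc.mp hj).1
    · exact ⟨L, Finset.mem_Icc.mpr ⟨le_refl _, hLM'⟩⟩
  have htail : G M ≤ a⁻¹ * 2^D * G M' := by
    obtain ⟨hr1, _⟩ := hratio M' hLM'
    have hfM'pos : 0 < f M' := hpos _ (by exact_mod_cast hLM')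
    have hfM : f M ≤ a⁻¹ * f M' := by
      rw [le_inv_mul_iff₀ ha]
      have : ((M:ℕ):ℝ) = ((M':ℕ):ℝ) + 1 := by rw [hMM]; push_cast; ring
      rw [this]
      linarith
    have hMpow : ((M:ℕ):ℝ)^D ≤ 2^D * ((M':ℕ):ℝ)^D := by
      rw [← mul_pow]
      apply pow_le_pow_left₀ (by positivity)
      have h1 : (1:ℝ) ≤ ((M':ℕ):ℝ) := by exact_mod_cast hM'1
      have : ((M:ℕ):ℝ) = ((M':ℕ):ℝ) + 1 := by rw [hMM]; push_cast; ring
      rw [this]; linarith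
    have hfM0 : 0 ≤ f M := (hpos _ (by exact_mod_cast le_trans hLM' (by omega : M' ≤ M))).le
    rw [hG]
    calc f M * ((M:ℕ):ℝ)^D ≤ (a⁻¹ * f M') * (2^D * ((M':ℕ):ℝ)^D) := by
          apply mul_le_mul hfM hMpow (by positivity) (by positivity)
      _ = a⁻¹ * 2^D * (f M' * ((M':ℕ):ℝ)^D) := by ring
  have hfull : SGfull ≤ (1 + a⁻¹ * 2^D) * SG1 := by
    have hsplit : SGfull = SG1 + G M := by
      rw [hSGfull, hSG1, hMM]
      exact Finset.sum_Icc_succ_top (by omega) G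
    have hGM' : G M' ≤ SG1 := by
      rw [hSG1]
      apply Finset.single_le_sum (f := G)
      · intro j hj
        exact (hGpos j (Finset.mem_Icc.mp hj).1).le
      · exact Finset.mem_Icc.mpr ⟨hLM', le_refl _⟩
    have h2D : (0:ℝ) ≤ a⁻¹ * 2^D := by positivity
    calc SGfull = SG1 + G M := hsplit
      _ ≤ SG1 + a⁻¹ * 2^D * G M' := by linarith [htail]
      _ ≤ SG1 + a⁻¹ * 2^D * SG1 := by nlinarith [htail, hGM']
      _ = (1 + a⁻¹ * 2^D) * SG1 := by ring
  -- integral bounds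
  set I : ℝ := ∫ t in (L:ℝ)..r, f t * t^D with hI
  have hadj : ∀ n : ℕ, ∑ k ∈ Finset.range n, (∫ t in ((L:ℝ)+k)..((L:ℝ)+k+1), f t * t^D)
      = ∫ t in (L:ℝ)..((L:ℝ)+n), f t * t^D := by
    intro n
    have := intervalIntegral.sum_integral_adjacent_intervals
      (f := fun t => f t * t^D) (μ := volume) (a := fun k => (L:ℝ)+k) (n := n) ?_
    · simpa [add_assoc] using this
    · intro k _
      apply hInt
      · simp
      · push_cast; linarith
  have hIup : I ≤ α * 2^D * SGfull := by
    have h1 : I ≤ ∫ t in (L:ℝ)..((M:ℝ)+1), f t * t^D := by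
      have hsplit := intervalIntegral.integral_add_adjacent_intervals
        (hInt (L:ℝ) r (le_refl _) (by linarith)) (hInt r ((M:ℝ)+1) (by linarith) (by linarith))
      have hnn : 0 ≤ ∫ t in r..((M:ℝ)+1), f t * t^D := by
        apply intervalIntegral.integral_nonneg (by linarith)
        intro u hu
        have : (L:ℝ) ≤ u := by linarith [hu.1]
        have := hpos u this
        have hu0 : (0:ℝ) ≤ u := by linarith
        positivity
      rw [hI]; linarith [hsplit]
    have h2 : (∫ t in (L:ℝ)..((M:ℝ)+1), f t * t^D) = ∑ k ∈ Finset.range (M+1-L),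
        (∫ t in ((L:ℝ)+k)..((L:ℝ)+k+1), f t * t^D) := by
      rw [hadj (M+1-L)]
      congr 1
      push_cast [Nat.cast_sub (by omega : L ≤ M+1)]
      ring
    have h3 : ∑ k ∈ Finset.range (M+1-L), (∫ t in ((L:ℝ)+k)..((L:ℝ)+k+1), f t * t^D)
        ≤ ∑ k ∈ Finset.range (M+1-L), α * 2^D * G (L+k) := by
      apply Finset.sum_le_sum
      intro k _
      have hcast : (L:ℝ)+k = ((L+k : ℕ):ℝ) := by push_cast; ring
      rw [hcast]
      exact (hpiece (L+k) (by omega)).2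
    have h4 : ∑ k ∈ Finset.range (M+1-L), α * 2^D * G (L+k) = α * 2^D * SGfull := by
      rw [← Finset.mul_sum, hSGfull]
      congr 1
      rw [← Finset.Ico_add_one_right_eq_Icc, Finset.sum_Ico_eq_sum_range]
    linarith [h1, h2 ▸ h1, h3, h4]
  have hIlow : β * SG1 ≤ I := by
    have h1 : (∫ t in (L:ℝ)..(M:ℝ), f t * t^D) ≤ I := by
      have hsplit := intervalIntegral.integral_add_adjacent_intervals
        (hInt (L:ℝ) (M:ℝ) (le_refl _) (by push_cast; exact_mod_cast Nat.cast_le.mpr (by omega : L ≤ M))) (hInt (M:ℝ) r (by exact_mod_cast Nat.cast_le.mpr (by omega : L ≤ M) : (L:ℝ) ≤ (M:ℝ)) hMr)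
      have hnn : 0 ≤ ∫ t in (M:ℝ)..r, f t * t^D := by
        apply intervalIntegral.integral_nonneg hMr
        intro u hu
        have hLu : (L:ℝ) ≤ u := le_trans (by exact_mod_cast Nat.cast_le.mpr (by omega : L ≤ M)) hu.1
        have := hpos u hLu
        have hu0 : (0:ℝ) ≤ u := by linarith
        positivity
      rw [hI]; linarith [hsplit]
    have h2 : (∫ t in (L:ℝ)..(M:ℝ), f t * t^D) = ∑ k ∈ Finset.range (M-L),
        (∫ t in ((L:ℝ)+k)..((L:ℝ)+k+1), f t * t^D) := by
      rw [hadj (M-L)]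
      congr 1
      push_cast [Nat.cast_sub (by omega : L ≤ M)]
      ring
    have h3 : ∑ k ∈ Finset.range (M-L), β * G (L+k)
        ≤ ∑ k ∈ Finset.range (M-L), (∫ t in ((L:ℝ)+k)..((L:ℝ)+k+1), f t * t^D) := by
      apply Finset.sum_le_sum
      intro k _
      have hcast : (L:ℝ)+k = ((L+k : ℕ):ℝ) := by push_cast; ring
      rw [hcast]
      exact (hpiece (L+k) (by omega)).1
    have h4 : ∑ k ∈ Finset.range (M-L), β * G (L+k) = β * SG1 := by
      rw [← Finset.mul_sum, hSG1]
      congr 1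
      rw [← Finset.Ico_add_one_right_eq_Icc, Finset.sum_Ico_eq_sum_range,
        show M'+1-L = M-L from by omega]
    linarith [h1, h2, h3, h4]
  -- lattice sum side
  set R : ℤ := ⌈r⌉ with hR
  have hrR : r ≤ (R:ℝ) := Int.le_ceil r
  set Box : Finset (Fin (D+1) → ℤ) := Fintype.piFinset (fun _ => Finset.Icc (-R) R) with hBox
  have hbox_mem : ∀ x : Fin (D+1) → ℤ, znorm x ≤ r → x ∈ Box := by
    intro x hx
    rw [hBox, Fintype.mem_piFinset]
    intro k
    rw [Finset.mem_Icc]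
    have h1 := abs_coord_le_znorm x k
    have h2 : |(x k : ℝ)| ≤ (R:ℝ) := le_trans (le_trans h1 hx) hrR
    rw [abs_le] at h2
    constructor
    · exact_mod_cast h2.1
    · exact_mod_cast h2.2
  have hsupp : ∀ x : Fin (D+1) → ℤ, x ∉ Box →
      (if (L:ℝ) ≤ znorm x ∧ znorm x ≤ r then f (znorm x) else 0) = 0 := by
    intro x hx
    rw [if_neg]
    intro hPx
    exact hx (hbox_mem x hPx.2)
  set Sfin : Finset (Fin (D+1) → ℤ) :=
    Box.filter (fun x => (L:ℝ) ≤ znorm x ∧ znorm x ≤ r) with hSfin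
  have htsum : (∑' x : Fin (D+1) → ℤ, if (L:ℝ) ≤ znorm x ∧ znorm x ≤ r then f (znorm x) else 0)
      = ∑ x ∈ Sfin, f (znorm x) := by
    rw [tsum_eq_sum (s := Box) hsupp, hSfin]
    exact (Finset.sum_filter _ _).symm
  set Φ : ℕ → Finset (Fin (D+1) → ℤ) := fun j => Sfin.filter (fun x => ⌊znorm x⌋₊ = j) with hΦ
  have hmapsto : ∀ x ∈ Sfin, ⌊znorm x⌋₊ ∈ Finset.Icc L M := by
    intro x hx
    obtain ⟨hxB, hx1, hx2⟩ := Finset.mem_filter.mp hx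
    rw [Finset.mem_Icc]
    exact ⟨Nat.le_floor hx1, Nat.floor_le_floor hx2⟩
  have hsum_fiber : ∑ j ∈ Finset.Icc L M, ∑ x ∈ Φ j, f (znorm x) = ∑ x ∈ Sfin, f (znorm x) :=
    Finset.sum_fiberwise_of_maps_to hmapsto _
  have hfibprop : ∀ j : ℕ, ∀ x ∈ Φ j, (j:ℝ) ≤ znorm x ∧ znorm x < (j:ℝ)+1 ∧ (L:ℝ) ≤ znorm x := by
    intro j x hx
    obtain ⟨hxS, hxj⟩ := Finset.mem_filter.mp hx
    obtain ⟨hxB, hx1, hx2⟩ := Finset.mem_filter.mp hxS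
    have := (Nat.floor_eq_iff (znorm_nonneg x)).mp hxj
    exact ⟨this.1, this.2, hx1⟩
  have hfib_nonneg : ∀ j : ℕ, 0 ≤ ∑ x ∈ Φ j, f (znorm x) := by
    intro j
    apply Finset.sum_nonneg
    intro x hx
    exact (hpos _ (hfibprop j x hx).2.2).le
  have hfibup : ∀ j ∈ Finset.Icc L M, (∑ x ∈ Φ j, f (znorm x)) ≤ α * Aup * G j := by
    intro j hj
    obtain ⟨hjL, hjM⟩ := Finset.mem_Icc.mp hj
    have hj1 : 1 ≤ j := le_trans hL hjL
    have hj1' : (1:ℝ) ≤ (j:ℝ) := by exact_mod_cast hj1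
    have hfj : 0 < f j := hpos _ (by exact_mod_cast hjL)
    have hpt : ∀ x ∈ Φ j, f (znorm x) ≤ α * f j := by
      intro x hx
      obtain ⟨h1, h2, _⟩ := hfibprop j x hx
      exact (f_interval_bounds ha hb hpos hmono hratio j hjL h1 h2.le).1
    have hcond : ∀ x ∈ Φ j, ((j:ℤ))^2 ≤ zsq x ∧ zsq x < ((j:ℤ)+1)^2 := by
      intro x hx
      obtain ⟨h1, h2, _⟩ := hfibprop j x hx
      constructor
      · have := (le_znorm_iff x (by positivity : (0:ℝ) ≤ (j:ℝ))).mp h1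
        exact_mod_cast this
      · have := (znorm_lt_iff x (by positivity : (0:ℝ) < (j:ℝ)+1)).mp h2
        have h3 : ((zsq x : ℤ):ℝ) < (((j:ℤ)+1:ℤ):ℝ)^2 := by push_cast; push_cast at this; linarith
        exact_mod_cast h3
    have hcard := shell_card_le D j hj1 (Φ j) hcond
    have hcR : ((Φ j).card : ℝ) ≤ Aup * (j:ℝ)^D := by
      calc ((Φ j).card : ℝ) ≤ (((D+1) * (2*(D+2)) * (2*j+3)^D : ℕ):ℝ) := by exact_mod_cast hcard
        _ = ((D:ℝ)+1) * (2*((D:ℝ)+2)) * (2*(j:ℝ)+3)^D := by push_cast; ring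
        _ ≤ ((D:ℝ)+1) * (2*((D:ℝ)+2)) * (5*(j:ℝ))^D := by
              apply mul_le_mul_of_nonneg_left _ (by positivity)
              apply pow_le_pow_left₀ (by linarith) (by linarith)
        _ = Aup * (j:ℝ)^D := by rw [hAup, mul_pow]; ring
    have hsum := Finset.sum_le_card_nsmul (Φ j) _ (α * f j) hpt
    rw [nsmul_eq_mul] at hsum
    calc (∑ x ∈ Φ j, f (znorm x)) ≤ ((Φ j).card : ℝ) * (α * f j) := hsum
      _ ≤ (Aup * (j:ℝ)^D) * (α * f j) := mul_le_mul_of_nonneg_right hcR (by positivity)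
      _ = α * Aup * G j := by rw [hG]; ring
  have hfiblow : ∀ j ∈ Finset.Icc L M', β * Alow * G j ≤ ∑ x ∈ Φ j, f (znorm x) := by
    intro j hj
    obtain ⟨hjL, hjM'⟩ := Finset.mem_Icc.mp hj
    have hj1 : 1 ≤ j := le_trans hL hjL
    have hj1' : (1:ℝ) ≤ (j:ℝ) := by exact_mod_cast hj1
    have hfj : 0 < f j := hpos _ (by exact_mod_cast hjL)
    obtain ⟨s, hscond, hscard⟩ := shell_exists D j hj1
    have hj1M : (j:ℝ) + 1 ≤ (M:ℝ) := by
      have : j + 1 ≤ M := by omega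
      exact_mod_cast this
    have hsubfib : s ⊆ Φ j := by
      intro x hx
      obtain ⟨h1, h2⟩ := hscond x hx
      have hzx1 : (j:ℝ) ≤ znorm x := by
        rw [le_znorm_iff x (by positivity : (0:ℝ) ≤ (j:ℝ))]
        exact_mod_cast h1
      have hzx2 : znorm x < (j:ℝ)+1 := by
        rw [znorm_lt_iff x (by positivity : (0:ℝ) < (j:ℝ)+1)]
        have : ((zsq x : ℤ):ℝ) < ((((j:ℤ)+1)^2 : ℤ):ℝ) := by exact_mod_cast h2
        push_cast at this
        push_cast
        linarith
      have hzxr : znorm x ≤ r := by linarith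
      have hzxL : (L:ℝ) ≤ znorm x := le_trans (by exact_mod_cast hjL) hzx1
      refine Finset.mem_filter.mpr ⟨Finset.mem_filter.mpr ⟨hbox_mem x hzxr, hzxL, hzxr⟩, ?_⟩
      rw [Nat.floor_eq_iff (znorm_nonneg x)]
      exact ⟨hzx1, hzx2⟩
    have hptlow : ∀ x ∈ s, β * f j ≤ f (znorm x) := by
      intro x hx
      have hxΦ := hsubfib hx
      obtain ⟨h1, h2, _⟩ := hfibprop j x hxΦ
      exact (f_interval_bounds ha hb hpos hmono hratio j hjL h1 h2.le).2
    have hsum1 := Finset.card_nsmul_le_sum s _ (β * f j) hptlow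
    rw [nsmul_eq_mul] at hsum1
    have hsum2 : ∑ x ∈ s, f (znorm x) ≤ ∑ x ∈ Φ j, f (znorm x) := by
      apply Finset.sum_le_sum_of_subset_of_nonneg hsubfib
      intro x hx _
      exact (hpos _ (hfibprop j x hx).2.2).le
    have hcardlow : Alow * (j:ℝ)^D ≤ (s.card : ℝ) := by
      have : ((j:ℝ) / (2*((D:ℝ)+1)))^D = Alow * (j:ℝ)^D := by
        rw [hAlow, div_pow, div_eq_mul_inv, ← inv_pow]
        ring
      rw [← this]
      exact hscard
    calc β * Alow * G j = (Alow * (j:ℝ)^D) * (β * f j) := by rw [hG]; ring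
      _ ≤ (s.card : ℝ) * (β * f j) := mul_le_mul_of_nonneg_right hcardlow (by positivity)
      _ ≤ ∑ x ∈ s, f (znorm x) := hsum1
      _ ≤ ∑ x ∈ Φ j, f (znorm x) := hsum2
  have hSup : ∑ x ∈ Sfin, f (znorm x) ≤ α * Aup * SGfull := by
    rw [← hsum_fiber]
    calc ∑ j ∈ Finset.Icc L M, ∑ x ∈ Φ j, f (znorm x)
        ≤ ∑ j ∈ Finset.Icc L M, α * Aup * G j := Finset.sum_le_sum hfibup
      _ = α * Aup * SGfull := by rw [hSGfull, Finset.mul_sum]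
  have hSlow : β * Alow * SG1 ≤ ∑ x ∈ Sfin, f (znorm x) := by
    rw [← hsum_fiber]
    have hstep : ∑ j ∈ Finset.Icc L M', ∑ x ∈ Φ j, f (znorm x)
        ≤ ∑ j ∈ Finset.Icc L M, ∑ x ∈ Φ j, f (znorm x) := by
      apply Finset.sum_le_sum_of_subset_of_nonneg
      · exact Finset.Icc_subset_Icc (le_refl _) (by omega)
      · intro j _ _
        exact hfib_nonneg j
    calc β * Alow * SG1 = ∑ j ∈ Finset.Icc L M', β * Alow * G j := by
          rw [hSG1, Finset.mul_sum]
      _ ≤ ∑ j ∈ Finset.Icc L M', ∑ x ∈ Φ j, f (znorm x) := Finset.sum_le_sum hfiblow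
      _ ≤ _ := hstep
  constructor
  · rw [htsum]
    have hIE : I ≤ E * SG1 := by
      calc I ≤ α * 2^D * SGfull := hIup
        _ ≤ α * 2^D * ((1 + a⁻¹ * 2^D) * SG1) :=
            mul_le_mul_of_nonneg_left hfull (by positivity)
        _ = E * SG1 := by rw [hE]; ring
    calc (β * Alow / E) * I ≤ (β * Alow / E) * (E * SG1) :=
          mul_le_mul_of_nonneg_left hIE (by positivity)
      _ = β * Alow * SG1 := by field_simp
      _ ≤ _ := hSlow
  · rw [htsum]
    calc ∑ x ∈ Sfin, f (znorm x) ≤ α * Aup * SGfull := hSup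
      _ ≤ α * Aup * ((1 + a⁻¹ * 2^D) * SG1) :=
          mul_le_mul_of_nonneg_left hfull (by positivity)
      _ = (α * Aup * (1 + a⁻¹ * 2^D) / β) * (β * SG1) := by field_simp
      _ ≤ (α * Aup * (1 + a⁻¹ * 2^D) / β) * I :=
          mul_le_mul_of_nonneg_left hIlow (by positivity)
end

section
/- For every real a and every b ≥ 1 there exists a constant c = c(a,b) > 0 such that for all real γ > 1, Σ_{1 ≤ j ≤ bγ} j^a e^{-γ/j} ≤ c γ^{a+1}. -/
/-!
Truncating the exponential series gives `e^{-x} ≤ n! / x^n` for `x > 0`. Choosing `n ≥ -a`, each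
term is at most `n! j^{a+n} / γ^n ≤ n! (bγ)^{a+n} / γ^n`, since `t ↦ t^{a+n}` is monotone, and there
are at most `bγ` terms, which gives the bound with `c = n! b^{a+n+1}`.
-/

open Finset Real Nat

lemma Real.exp_neg_le_factorial_div_pow {x : ℝ} (hx : 0 < x) (n : ℕ) :
    exp (-x) ≤ n ! / x ^ n := by
  rw [exp_neg, ← inv_div]
  exact inv_anti₀ (by positivity) (pow_div_factorial_le_exp x hx.le n)

lemma Real.rpow_mul_exp_neg_div_le {a γ t T : ℝ} {n : ℕ} (hγ : 0 < γ) (ht : 0 < t) (htT : t ≤ T)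
    (han : 0 ≤ a + n) : t ^ a * exp (-γ / t) ≤ n ! * T ^ (a + n) / γ ^ n :=
  calc t ^ a * exp (-γ / t)
      ≤ t ^ a * (n ! / (γ / t) ^ n) := by
        rw [neg_div]
        gcongr
        exact exp_neg_le_factorial_div_pow (div_pos hγ ht) n
    _ = n ! * t ^ (a + n) / γ ^ n := by
        rw [rpow_add ht, rpow_natCast, div_pow]
        field_simp
    _ ≤ n ! * T ^ (a + n) / γ ^ n := by gcongr

lemma Finset.sum_Icc_one_floor_le_mul {x B : ℝ} (hx : 0 ≤ x) (hB : 0 ≤ B) (f : ℕ → ℝ)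
    (hf : ∀ j ∈ Icc 1 ⌊x⌋₊, f j ≤ B) : ∑ j ∈ Icc 1 ⌊x⌋₊, f j ≤ x * B :=
  calc ∑ j ∈ Icc 1 ⌊x⌋₊, f j
      ≤ #(Icc 1 ⌊x⌋₊) • B := sum_le_card_nsmul _ _ _ hf
    _ = ⌊x⌋₊ * B := by simp
    _ ≤ x * B := by gcongr; exact Nat.floor_le hx

/-- For every real `a` and `b ≥ 1` there is `c > 0` with
`Σ_{1 ≤ j ≤ bγ} j^a e^{-γ/j} ≤ c γ^{a+1}` for all `γ > 1`. -/
theorem sum_pow_exp_div_le (a b : ℝ) (hb : 1 ≤ b) :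
    ∃ c : ℝ, 0 < c ∧ ∀ γ : ℝ, 1 < γ →
      ∑ j ∈ Finset.Icc 1 ⌊b * γ⌋₊, (j : ℝ) ^ a * Real.exp (-γ / j) ≤ c * γ ^ (a + 1) := by
  obtain ⟨n, hn⟩ := exists_nat_ge (-a)
  have hb0 : 0 < b := by linarith
  refine ⟨n ! * b ^ (a + n + 1), by positivity, fun γ hγ => ?_⟩
  have hγ0 : 0 < γ := by linarith
  have hbγ : 0 < b * γ := by positivity
  have hterm : ∀ j ∈ Icc 1 ⌊b * γ⌋₊,
      (j : ℝ) ^ a * exp (-γ / j) ≤ n ! * (b * γ) ^ (a + n) / γ ^ n := by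
    intro j hj
    obtain ⟨hj1, hjb⟩ := mem_Icc.mp hj
    exact rpow_mul_exp_neg_div_le hγ0 (by exact_mod_cast hj1)
      ((Nat.cast_le.mpr hjb).trans (Nat.floor_le hbγ.le)) (by linarith)
  calc _ ≤ b * γ * (n ! * (b * γ) ^ (a + n) / γ ^ n) :=
        sum_Icc_one_floor_le_mul hbγ.le (by positivity) _ hterm
    _ = n ! * b ^ (a + n + 1) * γ ^ (a + 1) := by
        rw [mul_rpow hb0.le hγ0.le, rpow_add hb0 _ 1, rpow_add hγ0 a 1, rpow_add hγ0 a n,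
          rpow_natCast, rpow_one, rpow_one]
        field_simp
end

section
/- Let d ≥ 1 and let ⟨·⟩ denote the spread ⟨z⟩ = max(1, max(|n|^{1/2}, ‖x‖)) on Z^{d+1}. Let α, β ∈ [0, d+1) with α + β > d + 2 and set γ = α + β - d - 2. Then Σ_{z ∈ Z^{d+1}} ⟨z_1 - z⟩^{-α} ⟨z_2 - z⟩^{-β} is bounded above and below by constant multiples (depending only on α, β, d) of ⟨z_1 - z_2⟩^{-γ}, uniformly in z_1, z_2 ∈ Z^{d+1}. -/
/-- `η(n,x) = max(|n|^{1/2}, ‖x‖)` on `ℤ × ℤ^d`. -/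
noncomputable def eta {d : ℕ} (z : ℤ × (Fin d → ℤ)) : ℝ :=
  max (Real.sqrt |(z.1 : ℝ)|) (Real.sqrt (∑ i, ((z.2 i : ℝ)) ^ 2))

/-- The spread `⟨z⟩ = max(1, η(z))`. -/
noncomputable def spread {d : ℕ} (z : ℤ × (Fin d → ℤ)) : ℝ :=
  max 1 (eta z)

/-!
Write `m = ⟨z₁ - z₂⟩`. By the triangle inequality `m ≤ ⟨z₁ - z⟩ + ⟨z₂ - z⟩`, so one of the two
factors is at least `m / 2`. Where the other factor is small, the large one is frozen at size
`≍ m` and what is left is a sum of `⟨u⟩^{-t}` over a ball `⟨u⟩ ≤ m`; otherwise both factors are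
at least `m / 2` and the summand is dominated by `⟨u⟩^{-(α+β)}` over the complement of a ball.
The parabolic ball `⟨u⟩ ≤ R` contains `≍ R^{d+2}` lattice points, so summing over dyadic shells
gives `≲ R^{d+2-t}` in both cases: the geometric series is dominated by its outermost shell when
`t < d + 2` and by its innermost one when `t > d + 2`. The lower bound comes from the
`≍ m^{d+2}` points within spread `m` of `z₂`, where the summand is `≳ m^{-α-β}`.
-/

open Finset

lemma Real.sqrt_abs_add_le (a b : ℝ) : √|a + b| ≤ √|a| + √|b| :=
  (Real.sqrt_le_sqrt (abs_add_le a b)).trans <| by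
    simpa only [Real.sqrt_eq_rpow] using
      Real.rpow_add_le_add_rpow (abs_nonneg a) (abs_nonneg b) (by norm_num) (by norm_num)

lemma two_pow_log_floor_le {x : ℝ} (hx : 1 ≤ x) : (2 : ℝ) ^ Nat.log 2 ⌊x⌋₊ ≤ x :=
  calc (2 : ℝ) ^ Nat.log 2 ⌊x⌋₊ = ((2 ^ Nat.log 2 ⌊x⌋₊ : ℕ) : ℝ) := by push_cast; rfl
    _ ≤ ⌊x⌋₊ := by exact_mod_cast Nat.pow_log_le_self 2 (Nat.floor_pos.2 hx).ne'
    _ ≤ x := Nat.floor_le (zero_le_one.trans hx)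

lemma lt_two_pow_log_floor_succ (x : ℝ) : x < 2 ^ (Nat.log 2 ⌊x⌋₊ + 1) :=
  calc x < ⌊x⌋₊ + 1 := Nat.lt_floor_add_one x
    _ ≤ ((2 ^ (Nat.log 2 ⌊x⌋₊ + 1) : ℕ) : ℝ) := by
        exact_mod_cast Nat.lt_pow_succ_log_self one_lt_two _
    _ = 2 ^ (Nat.log 2 ⌊x⌋₊ + 1) := by push_cast; rfl

lemma sum_filter_sub_le {G : Type*} [AddCommGroup G] {p : G → Prop} [DecidablePred p]
    {φ : G → ℝ} {c : ℝ} (h : ∀ s : Finset G, ∑ x ∈ s with p x, φ x ≤ c) (a : G) (s : Finset G) :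
    ∑ x ∈ s with p (a - x), φ (a - x) ≤ c := by
  simpa only [sum_filter, sum_map, Equiv.coe_toEmbedding, Equiv.subLeft_apply] using
    h (s.map (Equiv.subLeft a).toEmbedding)

-- One of `a`, `b` is at least `m / 2`; split by whether the other one is too.
lemma rpow_neg_mul_rpow_neg_le {a b m α β : ℝ} (ha : 0 < a) (hb : 0 < b) (hα : 0 ≤ α)
    (hβ : 0 ≤ β) (hm : 0 < m) (hmab : m ≤ a + b) :
    a ^ (-α) * b ^ (-β) ≤
      (m / 2) ^ (-β) * (if a ≤ m then a ^ (-α) else 0) +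
        (m / 2) ^ (-α) * (if b ≤ m then b ^ (-β) else 0) +
        (if m / 2 ≤ a then a ^ (-(α + β)) else 0) + (if m / 2 ≤ b then b ^ (-(α + β)) else 0) := by
  wlog hab : a ≤ b generalizing a b α β
  · have := this hb ha hβ hα (by linarith) (le_of_not_ge hab)
    rw [add_comm β α] at this
    linarith
  have h₁ : 0 ≤ (m / 2) ^ (-β) * (if a ≤ m then a ^ (-α) else 0) := by positivity
  have h₂ : 0 ≤ (m / 2) ^ (-α) * (if b ≤ m then b ^ (-β) else 0) := by positivity
  have h₃ : 0 ≤ if m / 2 ≤ a then a ^ (-(α + β)) else 0 := by positivity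
  have h₄ : 0 ≤ if m / 2 ≤ b then b ^ (-(α + β)) else 0 := by positivity
  by_cases hma : m / 2 ≤ a
  · have : a ^ (-α) * b ^ (-β) ≤ a ^ (-(α + β)) := by
      rw [neg_add, Real.rpow_add ha]
      exact mul_le_mul_of_nonneg_left (Real.rpow_le_rpow_of_nonpos ha hab (neg_nonpos.2 hβ))
        (by positivity)
    rw [if_pos hma] at h₃ ⊢
    linarith
  · have : a ^ (-α) * b ^ (-β) ≤ (m / 2) ^ (-β) * a ^ (-α) := by
      rw [mul_comm]
      exact mul_le_mul_of_nonneg_right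
        (Real.rpow_le_rpow_of_nonpos (by positivity) (by linarith) (neg_nonpos.2 hβ))
        (by positivity)
    rw [if_pos (show a ≤ m by linarith)] at h₁ ⊢
    linarith

section Spread

variable {d : ℕ}

lemma one_le_spread (z : ℤ × (Fin d → ℤ)) : 1 ≤ spread z := le_max_left _ _

lemma spread_pos (z : ℤ × (Fin d → ℤ)) : 0 < spread z := one_pos.trans_le (one_le_spread z)

lemma spread_neg (z : ℤ × (Fin d → ℤ)) : spread (-z) = spread z := by
  simp [spread, eta]

lemma sqrt_sum_sq_eq_norm (x : Fin d → ℤ) :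
    √(∑ i, (x i : ℝ) ^ 2) = ‖WithLp.toLp 2 (Int.cast ∘ x : Fin d → ℝ)‖ := by
  simp [EuclideanSpace.norm_eq]

lemma eta_add_le (a b : ℤ × (Fin d → ℤ)) : eta (a + b) ≤ eta a + eta b := by
  refine max_le ?_ ?_
  · calc √|((a + b).1 : ℝ)| ≤ √|(a.1 : ℝ)| + √|(b.1 : ℝ)| := by
          rw [Prod.fst_add, Int.cast_add]; exact Real.sqrt_abs_add_le _ _
      _ ≤ eta a + eta b := add_le_add (le_max_left _ _) (le_max_left _ _)
  · calc √(∑ i, ((a + b).2 i : ℝ) ^ 2)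
          = ‖WithLp.toLp 2 (Int.cast ∘ a.2 : Fin d → ℝ) + WithLp.toLp 2 (Int.cast ∘ b.2)‖ := by
          rw [sqrt_sum_sq_eq_norm, ← WithLp.toLp_add]; congr 2; ext; simp
      _ ≤ √(∑ i, (a.2 i : ℝ) ^ 2) + √(∑ i, (b.2 i : ℝ) ^ 2) := by
          rw [sqrt_sum_sq_eq_norm, sqrt_sum_sq_eq_norm]; exact norm_add_le _ _
      _ ≤ eta a + eta b := add_le_add (le_max_right _ _) (le_max_right _ _)

lemma spread_add_le (a b : ℤ × (Fin d → ℤ)) : spread (a + b) ≤ spread a + spread b :=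
  max_le (by linarith [one_le_spread a, one_le_spread b]) <|
    (eta_add_le a b).trans (add_le_add (le_max_right _ _) (le_max_right _ _))

lemma spread_sub_le_add (z₁ z₂ z : ℤ × (Fin d → ℤ)) :
    spread (z₁ - z₂) ≤ spread (z₁ - z) + spread (z₂ - z) := by
  have h := spread_add_le (z₁ - z) (-(z₂ - z))
  rwa [spread_neg, ← sub_eq_add_neg, sub_sub_sub_cancel_right] at h

lemma abs_fst_le_spread_sq (z : ℤ × (Fin d → ℤ)) : |(z.1 : ℝ)| ≤ spread z ^ 2 :=
  (Real.sqrt_le_left (spread_pos z).le).1 ((le_max_left _ _).trans (le_max_right _ _))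

lemma abs_snd_le_spread (z : ℤ × (Fin d → ℤ)) (i : Fin d) : |(z.2 i : ℝ)| ≤ spread z := by
  calc |(z.2 i : ℝ)| = √((z.2 i : ℝ) ^ 2) := (Real.sqrt_sq_eq_abs _).symm
    _ ≤ √(∑ j, (z.2 j : ℝ) ^ 2) :=
        Real.sqrt_le_sqrt (single_le_sum (fun j _ => sq_nonneg (z.2 j : ℝ)) (mem_univ i))
    _ ≤ spread z := (le_max_right _ _).trans (le_max_right _ _)

lemma spread_le_of_abs_le {R : ℝ} (hR : 1 ≤ R) (z : ℤ × (Fin d → ℤ))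
    (h₁ : |(z.1 : ℝ)| ≤ R ^ 2) (h₂ : ∑ i, (z.2 i : ℝ) ^ 2 ≤ R ^ 2) : spread z ≤ R := by
  have hR₀ : 0 ≤ R := zero_le_one.trans hR
  refine max_le hR (max_le ?_ ?_) <;> rw [Real.sqrt_le_left hR₀] <;> assumption

noncomputable def latticeBox (d M N : ℕ) : Finset (ℤ × (Fin d → ℤ)) :=
  Icc (-(M : ℤ)) M ×ˢ Fintype.piFinset fun _ => Icc (-(N : ℤ)) N

lemma mem_latticeBox {M N : ℕ} {z : ℤ × (Fin d → ℤ)} :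
    z ∈ latticeBox d M N ↔ |z.1| ≤ M ∧ ∀ i, |z.2 i| ≤ N := by
  simp only [latticeBox, mem_product, Fintype.mem_piFinset, mem_Icc, abs_le]

lemma card_latticeBox (M N : ℕ) : #(latticeBox d M N) = (2 * M + 1) * (2 * N + 1) ^ d := by
  simp only [latticeBox, card_product, Fintype.card_piFinset, prod_const, card_univ,
    Fintype.card_fin, Int.card_Icc]
  congr <;> omega

lemma card_le_of_spread_le {R : ℝ} (hR : 1 ≤ R) (F : Finset (ℤ × (Fin d → ℤ)))
    (hF : ∀ z ∈ F, spread z ≤ R) : (#F : ℝ) ≤ 3 ^ (d + 1) * R ^ (d + 2) := by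
  have hR₀ : 0 ≤ R := zero_le_one.trans hR
  have hsub : F ⊆ latticeBox d ⌊R ^ 2⌋₊ ⌊R⌋₊ := fun z hz => by
    refine mem_latticeBox.2 ⟨?_, fun i => ?_⟩
    · rw [Int.natCast_floor_eq_floor (by positivity), Int.le_floor, Int.cast_abs]
      exact (abs_fst_le_spread_sq z).trans (pow_le_pow_left₀ (spread_pos z).le (hF z hz) 2)
    · rw [Int.natCast_floor_eq_floor hR₀, Int.le_floor, Int.cast_abs]
      exact (abs_snd_le_spread z i).trans (hF z hz)
  have hM : 2 * (⌊R ^ 2⌋₊ : ℝ) + 1 ≤ 3 * R ^ 2 := by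
    nlinarith [Nat.floor_le (sq_nonneg R)]
  have hN : 2 * (⌊R⌋₊ : ℝ) + 1 ≤ 3 * R := by linarith [Nat.floor_le hR₀]
  calc (#F : ℝ) ≤ #(latticeBox d ⌊R ^ 2⌋₊ ⌊R⌋₊) := by exact_mod_cast card_le_card hsub
    _ = (2 * (⌊R ^ 2⌋₊ : ℝ) + 1) * (2 * (⌊R⌋₊ : ℝ) + 1) ^ d := by
        rw [card_latticeBox]; push_cast; ring
    _ ≤ (3 * R ^ 2) * (3 * R) ^ d := by gcongr
    _ = 3 ^ (d + 1) * R ^ (d + 2) := by ring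

lemma exists_card_ge_of_spread_le {R : ℝ} (hR : 1 ≤ R) :
    ∃ F : Finset (ℤ × (Fin d → ℤ)), (∀ z ∈ F, spread z ≤ R) ∧
      R ^ (d + 2) ≤ (d + 1) ^ d * #F := by
  have hR₀ : 0 ≤ R := zero_le_one.trans hR
  set N := ⌊R / (d + 1)⌋₊
  refine ⟨latticeBox d ⌊R ^ 2⌋₊ N, fun z hz => ?_, ?_⟩
  · obtain ⟨h₁, h₂⟩ := mem_latticeBox.1 hz
    refine spread_le_of_abs_le hR z ?_ ?_
    · rw [← Int.cast_abs]
      exact (Int.cast_le.2 h₁).trans (Nat.floor_le (sq_nonneg R))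
    · have hi : ∀ i, (z.2 i : ℝ) ^ 2 ≤ (R / (d + 1)) ^ 2 := fun i => by
        rw [← sq_abs, ← Int.cast_abs]
        exact pow_le_pow_left₀ (by positivity)
          ((Int.cast_le.2 (h₂ i)).trans (Nat.floor_le (by positivity))) 2
      calc ∑ i, (z.2 i : ℝ) ^ 2 ≤ d * (R / (d + 1)) ^ 2 := by
            simpa using sum_le_sum fun i (_ : i ∈ univ) => hi i
        _ ≤ R ^ 2 := by
            rw [div_pow, mul_div_assoc']
            refine div_le_of_le_mul₀ (by positivity) (sq_nonneg R) ?_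
            nlinarith [mul_nonneg (sq_nonneg R) (by positivity : (0 : ℝ) ≤ d ^ 2 + d + 1)]
  · have hM : R ^ 2 ≤ 2 * (⌊R ^ 2⌋₊ : ℝ) + 1 := by linarith [Nat.lt_floor_add_one (R ^ 2)]
    have hN : R / (d + 1) ≤ 2 * (N : ℝ) + 1 := by linarith [Nat.lt_floor_add_one (R / (d + 1))]
    calc R ^ (d + 2) = (d + 1) ^ d * (R ^ 2 * (R / (d + 1)) ^ d) := by
          rw [div_pow]; field_simp; ring
      _ ≤ (d + 1) ^ d * ((2 * (⌊R ^ 2⌋₊ : ℝ) + 1) * (2 * (N : ℝ) + 1) ^ d) := by gcongr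
      _ = (d + 1) ^ d * #(latticeBox d ⌊R ^ 2⌋₊ N) := by rw [card_latticeBox]; push_cast; ring

-- the dyadic shell `2 ^ k ≤ spread z < 2 ^ (k + 1)` containing `z`
noncomputable def spreadLevel (z : ℤ × (Fin d → ℤ)) : ℕ := Nat.log 2 ⌊spread z⌋₊

lemma sum_rpow_neg_le_of_spreadLevel_eq {t : ℝ} (ht : 0 ≤ t) (j : ℕ)
    (F : Finset (ℤ × (Fin d → ℤ))) (hF : ∀ z ∈ F, spreadLevel z = j) :
    ∑ z ∈ F, spread z ^ (-t) ≤ 3 ^ (d + 1) * 2 ^ (d + 2) * ((2 : ℝ) ^ ((d : ℝ) + 2 - t)) ^ j := by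
  have hterm : ∀ z ∈ F, spread z ^ (-t) ≤ ((2 : ℝ) ^ (-t)) ^ j := fun z hz => by
    rw [Real.rpow_pow_comm zero_le_two]
    refine Real.rpow_le_rpow_of_nonpos (by positivity) ?_ (neg_nonpos.2 ht)
    rw [← hF z hz]; exact two_pow_log_floor_le (one_le_spread z)
  have hcard : (#F : ℝ) ≤ 3 ^ (d + 1) * (2 ^ (j + 1)) ^ (d + 2) :=
    card_le_of_spread_le (one_le_pow₀ one_le_two) F fun z hz => by
      rw [← hF z hz]; exact (lt_two_pow_log_floor_succ (spread z)).le
  have hbase : (2 : ℝ) ^ ((d : ℝ) + 2 - t) = 2 ^ (d + 2) * 2 ^ (-t) := by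
    rw [sub_eq_add_neg, Real.rpow_add two_pos]; norm_cast
  have hshell : ((2 : ℝ) ^ (j + 1)) ^ (d + 2) = 2 ^ (d + 2) * (2 ^ (d + 2)) ^ j := by
    rw [← pow_mul, ← pow_mul, ← pow_add]; ring_nf
  calc ∑ z ∈ F, spread z ^ (-t) ≤ #F * ((2 : ℝ) ^ (-t)) ^ j := by
        simpa using sum_le_sum hterm
    _ ≤ 3 ^ (d + 1) * (2 ^ (j + 1)) ^ (d + 2) * ((2 : ℝ) ^ (-t)) ^ j := by gcongr
    _ = 3 ^ (d + 1) * 2 ^ (d + 2) * ((2 : ℝ) ^ ((d : ℝ) + 2 - t)) ^ j := by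
        rw [hbase, hshell, mul_pow]; ring

lemma sum_rpow_neg_le_sum_spreadLevel {t : ℝ} (ht : 0 ≤ t) (F : Finset (ℤ × (Fin d → ℤ))) :
    ∑ z ∈ F, spread z ^ (-t) ≤
      3 ^ (d + 1) * 2 ^ (d + 2) * ∑ j ∈ F.image spreadLevel, ((2 : ℝ) ^ ((d : ℝ) + 2 - t)) ^ j := by
  rw [← sum_fiberwise_of_maps_to fun z hz => mem_image_of_mem spreadLevel hz, mul_sum]
  exact sum_le_sum fun j _ =>
    sum_rpow_neg_le_of_spreadLevel_eq ht j _ fun z hz => (mem_filter.1 hz).2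

lemma exists_sum_rpow_neg_le_of_spread_le {t : ℝ} (ht₀ : 0 ≤ t) (ht : t < d + 2) :
    ∃ C > 0, ∀ R ≥ 1, ∀ s : Finset (ℤ × (Fin d → ℤ)),
      ∑ z ∈ s with spread z ≤ R, spread z ^ (-t) ≤ C * R ^ ((d : ℝ) + 2 - t) := by
  set r := (2 : ℝ) ^ ((d : ℝ) + 2 - t)
  have hr : 1 < r := Real.one_lt_rpow one_lt_two (by linarith)
  have hr₁ : 0 < r - 1 := sub_pos.2 hr
  refine ⟨3 ^ (d + 1) * 2 ^ (d + 2) * r / (r - 1), by positivity, fun R hR s => ?_⟩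
  set J := Nat.log 2 ⌊R⌋₊
  have hlevels : {z ∈ s | spread z ≤ R}.image spreadLevel ⊆ range (J + 1) := by
    simp only [subset_iff, mem_image, mem_filter, mem_range]
    rintro _ ⟨z, ⟨-, hz⟩, rfl⟩
    exact Nat.lt_succ_of_le (Nat.log_mono_right (Nat.floor_le_floor hz))
  have hgeom : ∑ j ∈ range (J + 1), r ^ j ≤ r ^ (J + 1) / (r - 1) := by
    rw [geom_sum_eq hr.ne']; exact div_le_div_of_nonneg_right (by linarith) hr₁.le
  have hpow : r ^ (J + 1) ≤ r * R ^ ((d : ℝ) + 2 - t) := by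
    have hJ : r ^ J = ((2 : ℝ) ^ J) ^ ((d : ℝ) + 2 - t) := Real.rpow_pow_comm zero_le_two _ _
    rw [pow_succ', hJ]
    gcongr
    exact two_pow_log_floor_le hR
  calc ∑ z ∈ s with spread z ≤ R, spread z ^ (-t)
      ≤ 3 ^ (d + 1) * 2 ^ (d + 2) * ∑ j ∈ {z ∈ s | spread z ≤ R}.image spreadLevel, r ^ j :=
        sum_rpow_neg_le_sum_spreadLevel ht₀ _
    _ ≤ 3 ^ (d + 1) * 2 ^ (d + 2) * ∑ j ∈ range (J + 1), r ^ j := by gcongr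
    _ ≤ 3 ^ (d + 1) * 2 ^ (d + 2) * (r * R ^ ((d : ℝ) + 2 - t) / (r - 1)) := by
        gcongr; exact hgeom.trans (by gcongr)
    _ = 3 ^ (d + 1) * 2 ^ (d + 2) * r / (r - 1) * R ^ ((d : ℝ) + 2 - t) := by ring

lemma exists_sum_rpow_neg_le_of_le_spread {t : ℝ} (ht : d + 2 < t) :
    ∃ C > 0, ∀ R > 0, ∀ s : Finset (ℤ × (Fin d → ℤ)),
      ∑ z ∈ s with R ≤ spread z, spread z ^ (-t) ≤ C * R ^ ((d : ℝ) + 2 - t) := by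
  set r := (2 : ℝ) ^ ((d : ℝ) + 2 - t)
  have hr₀ : 0 < r := by positivity
  have hr : r < 1 := Real.rpow_lt_one_of_one_lt_of_neg one_lt_two (by linarith)
  have hr₁ : 0 < 1 - r := sub_pos.2 hr
  refine ⟨3 ^ (d + 1) * 2 ^ (d + 2) * 2 ^ (t - d - 2) / (1 - r), by positivity, fun R hR s => ?_⟩
  set j₀ := Nat.log 2 ⌊R⌋₊
  set T := {z ∈ s | R ≤ spread z}.image spreadLevel
  have hlevels : T ⊆ Ico j₀ (T.sup id + 1) := fun j hj => by
    refine mem_Ico.2 ⟨?_, Nat.lt_succ_of_le (le_sup (f := id) hj)⟩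
    obtain ⟨z, hz, rfl⟩ := mem_image.1 hj
    exact Nat.log_mono_right (Nat.floor_le_floor (mem_filter.1 hz).2)
  have hpow : r ^ j₀ ≤ 2 ^ (t - d - 2) * R ^ ((d : ℝ) + 2 - t) := by
    have hj₀ : R / 2 ≤ 2 ^ j₀ := by
      have := lt_two_pow_log_floor_succ R
      rw [pow_succ] at this; linarith
    calc r ^ j₀ = ((2 : ℝ) ^ j₀) ^ ((d : ℝ) + 2 - t) := Real.rpow_pow_comm zero_le_two _ _
      _ ≤ (R / 2) ^ ((d : ℝ) + 2 - t) :=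
          Real.rpow_le_rpow_of_nonpos (by positivity) hj₀ (by linarith)
      _ = 2 ^ (t - d - 2) * R ^ ((d : ℝ) + 2 - t) := by
          rw [Real.div_rpow hR.le zero_le_two, div_eq_inv_mul, ← Real.rpow_neg zero_le_two]
          ring_nf
  calc ∑ z ∈ s with R ≤ spread z, spread z ^ (-t)
      ≤ 3 ^ (d + 1) * 2 ^ (d + 2) * ∑ j ∈ T, r ^ j :=
        sum_rpow_neg_le_sum_spreadLevel (by linarith [d.cast_nonneg (α := ℝ)]) _
    _ ≤ 3 ^ (d + 1) * 2 ^ (d + 2) * ∑ j ∈ Ico j₀ (T.sup id + 1), r ^ j := by gcongr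
    _ ≤ 3 ^ (d + 1) * 2 ^ (d + 2) * (2 ^ (t - d - 2) * R ^ ((d : ℝ) + 2 - t) / (1 - r)) := by
        gcongr; exact (geom_sum_Ico_le_of_lt_one hr₀.le hr).trans (by gcongr)
    _ = 3 ^ (d + 1) * 2 ^ (d + 2) * 2 ^ (t - d - 2) / (1 - r) * R ^ ((d : ℝ) + 2 - t) := by ring

lemma sum_spread_rpow_neg_mul_le (α β : ℝ) (hα : 0 ≤ α) (hβ : 0 ≤ β)
    (z₁ z₂ : ℤ × (Fin d → ℤ)) (s : Finset (ℤ × (Fin d → ℤ))) :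
    ∑ z ∈ s, spread (z₁ - z) ^ (-α) * spread (z₂ - z) ^ (-β) ≤
      (spread (z₁ - z₂) / 2) ^ (-β) *
          ∑ z ∈ s with spread (z₁ - z) ≤ spread (z₁ - z₂), spread (z₁ - z) ^ (-α) +
        (spread (z₁ - z₂) / 2) ^ (-α) *
          ∑ z ∈ s with spread (z₂ - z) ≤ spread (z₁ - z₂), spread (z₂ - z) ^ (-β) +
        ∑ z ∈ s with spread (z₁ - z₂) / 2 ≤ spread (z₁ - z), spread (z₁ - z) ^ (-(α + β)) +
        ∑ z ∈ s with spread (z₁ - z₂) / 2 ≤ spread (z₂ - z), spread (z₂ - z) ^ (-(α + β)) := by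
  simp only [sum_filter, mul_sum, ← sum_add_distrib]
  exact sum_le_sum fun z _ => rpow_neg_mul_rpow_neg_le (spread_pos _) (spread_pos _) hα hβ
    (spread_pos _) (spread_sub_le_add z₁ z₂ z)

lemma exists_sum_spread_rpow_neg_mul_le {α β : ℝ} (hα : 0 ≤ α) (hα' : α < d + 2) (hβ : 0 ≤ β)
    (hβ' : β < d + 2) (hsum : d + 2 < α + β) :
    ∃ C > 0, ∀ (z₁ z₂ : ℤ × (Fin d → ℤ)) (s : Finset (ℤ × (Fin d → ℤ))),
      ∑ z ∈ s, spread (z₁ - z) ^ (-α) * spread (z₂ - z) ^ (-β) ≤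
        C * spread (z₁ - z₂) ^ (-(α + β - d - 2)) := by
  obtain ⟨Cα, hCα, hnearα⟩ := exists_sum_rpow_neg_le_of_spread_le hα hα'
  obtain ⟨Cβ, hCβ, hnearβ⟩ := exists_sum_rpow_neg_le_of_spread_le hβ hβ'
  obtain ⟨Cγ, hCγ, hfar⟩ := exists_sum_rpow_neg_le_of_le_spread hsum
  refine ⟨2 ^ β * Cα + 2 ^ α * Cβ + 2 * 2 ^ (α + β - d - 2) * Cγ, by positivity, fun z₁ z₂ s => ?_⟩
  set m := spread (z₁ - z₂)
  have hm : 0 < m := spread_pos _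
  have hhalf : ∀ x : ℝ, (m / 2) ^ x = 2 ^ (-x) * m ^ x := fun x => by
    rw [Real.div_rpow hm.le zero_le_two, div_eq_inv_mul, ← Real.rpow_neg zero_le_two]
  have eα : m ^ (-β) * m ^ ((d : ℝ) + 2 - α) = m ^ (-(α + β - d - 2)) := by
    rw [← Real.rpow_add hm]; ring_nf
  have eβ : m ^ (-α) * m ^ ((d : ℝ) + 2 - β) = m ^ (-(α + β - d - 2)) := by
    rw [← Real.rpow_add hm]; ring_nf
  have eγ : (d : ℝ) + 2 - (α + β) = -(α + β - d - 2) := by ring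
  refine (sum_spread_rpow_neg_mul_le α β hα hβ z₁ z₂ s).trans ?_
  calc _ ≤ (m / 2) ^ (-β) * (Cα * m ^ ((d : ℝ) + 2 - α)) +
        (m / 2) ^ (-α) * (Cβ * m ^ ((d : ℝ) + 2 - β)) +
        Cγ * (m / 2) ^ ((d : ℝ) + 2 - (α + β)) + Cγ * (m / 2) ^ ((d : ℝ) + 2 - (α + β)) := by
        have hm₁ : 1 ≤ m := one_le_spread _
        gcongr
        exacts [sum_filter_sub_le (hnearα m hm₁) z₁ s, sum_filter_sub_le (hnearβ m hm₁) z₂ s,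
          sum_filter_sub_le (hfar (m / 2) (by positivity)) z₁ s,
          sum_filter_sub_le (hfar (m / 2) (by positivity)) z₂ s]
    _ = (2 ^ β * Cα + 2 ^ α * Cβ + 2 * 2 ^ (α + β - d - 2) * Cγ) * m ^ (-(α + β - d - 2)) := by
        rw [hhalf, hhalf, hhalf, eγ, neg_neg, neg_neg, neg_neg]
        linear_combination (2 ^ β * Cα) * eα + (2 ^ α * Cβ) * eβ

lemma exists_le_sum_spread_rpow_neg_mul {α β : ℝ} (hα : 0 ≤ α) (hβ : 0 ≤ β)
    (z₁ z₂ : ℤ × (Fin d → ℤ)) :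
    ∃ s : Finset (ℤ × (Fin d → ℤ)),
      2 ^ (-α) / (d + 1) ^ d * spread (z₁ - z₂) ^ (-(α + β - d - 2)) ≤
        ∑ z ∈ s, spread (z₁ - z) ^ (-α) * spread (z₂ - z) ^ (-β) := by
  set m := spread (z₁ - z₂)
  have hm₀ : 0 < m := spread_pos _
  obtain ⟨F, hF, hcard⟩ := exists_card_ge_of_spread_le (one_le_spread (z₁ - z₂))
  refine ⟨F.map (Equiv.subLeft z₂).toEmbedding, ?_⟩
  simp only [sum_map, Equiv.coe_toEmbedding, Equiv.subLeft_apply, sub_sub_cancel]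
  have hterm : ∀ u ∈ F, (2 * m) ^ (-α) * m ^ (-β) ≤
      spread (z₁ - (z₂ - u)) ^ (-α) * spread u ^ (-β) := fun u hu => by
    have hu₁ : spread (z₁ - (z₂ - u)) ≤ 2 * m := by
      rw [show z₁ - (z₂ - u) = (z₁ - z₂) + u by abel]
      linarith [spread_add_le (z₁ - z₂) u, hF u hu]
    exact mul_le_mul (Real.rpow_le_rpow_of_nonpos (spread_pos _) hu₁ (neg_nonpos.2 hα))
      (Real.rpow_le_rpow_of_nonpos (spread_pos _) (hF u hu) (neg_nonpos.2 hβ)) (by positivity)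
      (Real.rpow_nonneg (spread_pos _).le _)
  have hpow : m ^ (d + 2) * m ^ (-α) * m ^ (-β) = m ^ (-(α + β - d - 2)) := by
    rw [← Real.rpow_natCast, ← Real.rpow_add hm₀, ← Real.rpow_add hm₀]
    push_cast; ring_nf
  calc 2 ^ (-α) / (d + 1) ^ d * m ^ (-(α + β - d - 2))
      = m ^ (d + 2) * ((2 * m) ^ (-α) * m ^ (-β)) / (d + 1) ^ d := by
        rw [Real.mul_rpow zero_le_two hm₀.le, ← hpow]; ring
    _ ≤ (d + 1) ^ d * #F * ((2 * m) ^ (-α) * m ^ (-β)) / (d + 1) ^ d := by gcongr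
    _ = #F * ((2 * m) ^ (-α) * m ^ (-β)) := by field_simp
    _ ≤ _ := by simpa using card_nsmul_le_sum F _ _ hterm

end Spread

theorem spread_convolution_asymptotics_general
    (d : ℕ) (α β : ℝ)
    (hα : 0 ≤ α) (hα' : α < d + 1) (hβ : 0 ≤ β) (hβ' : β < d + 1)
    (hsum : (d : ℝ) + 2 < α + β) :
    ∃ c C : ℝ, 0 < c ∧ 0 < C ∧
      ∀ z₁ z₂ : ℤ × (Fin d → ℤ),
        c * (spread (z₁ - z₂)) ^ (-(α + β - (d : ℝ) - 2)) ≤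
          (∑' z : ℤ × (Fin d → ℤ), (spread (z₁ - z)) ^ (-α) * (spread (z₂ - z)) ^ (-β)) ∧
        (∑' z : ℤ × (Fin d → ℤ), (spread (z₁ - z)) ^ (-α) * (spread (z₂ - z)) ^ (-β)) ≤
          C * (spread (z₁ - z₂)) ^ (-(α + β - (d : ℝ) - 2)) := by
  obtain ⟨C, hC, hupper⟩ :=
    exists_sum_spread_rpow_neg_mul_le hα (by linarith) hβ (by linarith) hsum
  refine ⟨2 ^ (-α) / (d + 1) ^ d, C, by positivity, hC, fun z₁ z₂ => ?_⟩
  have hnonneg : ∀ z, 0 ≤ spread (z₁ - z) ^ (-α) * spread (z₂ - z) ^ (-β) := fun z =>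
    mul_nonneg (Real.rpow_nonneg (spread_pos _).le _) (Real.rpow_nonneg (spread_pos _).le _)
  obtain ⟨s, hs⟩ := exists_le_sum_spread_rpow_neg_mul hα hβ z₁ z₂
  exact ⟨hs.trans ((summable_of_sum_le hnonneg (hupper z₁ z₂)).sum_le_tsum s fun z _ => hnonneg z),
    Real.tsum_le_of_sum_le hnonneg (hupper z₁ z₂)⟩

/-- Convolution estimate for spreads:
`Σ_z ⟨z₁ - z⟩^{-α} ⟨z₂ - z⟩^{-β} ≍ ⟨z₁ - z₂⟩^{-γ}` with `γ = α + β - d - 2`,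
uniformly in `z₁, z₂`. -/
theorem spread_convolution_asymptotics
    (d : ℕ) (hd : 1 ≤ d) (α β : ℝ)
    (hα : 0 ≤ α) (hα' : α < d + 1) (hβ : 0 ≤ β) (hβ' : β < d + 1)
    (hsum : (d : ℝ) + 2 < α + β) :
    ∃ c C : ℝ, 0 < c ∧ 0 < C ∧
      ∀ z₁ z₂ : ℤ × (Fin d → ℤ),
        c * (spread (z₁ - z₂)) ^ (-(α + β - (d : ℝ) - 2)) ≤
          (∑' z : ℤ × (Fin d → ℤ), (spread (z₁ - z)) ^ (-α) * (spread (z₂ - z)) ^ (-β)) ∧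
        (∑' z : ℤ × (Fin d → ℤ), (spread (z₁ - z)) ^ (-α) * (spread (z₂ - z)) ^ (-β)) ≤
          C * (spread (z₁ - z₂)) ^ (-(α + β - (d : ℝ) - 2)) :=
  spread_convolution_asymptotics_general d α β hα hα' hβ hβ' hsum
end

section
/- Let d ≥ 1 and c > 0. For ε > 0 small enough, the integral ∫_{B(0;ε)} ∫_{-ε}^{ε} (h_0² + ‖h'‖⁴)^{-1} dh_0 dh' over (h_0, h') ∈ [-ε,ε] × B_{R^d}(0;ε) is infinite if d ∈ {1,2} and finite if d ≥ 3. -/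
open MeasureTheory Set Metric Real ProbabilityTheory
open scoped ENNReal

/-! For `h' ≠ 0` the inner integral is comparable to `‖h'‖⁻²`: the range `|h₀| ≤ ‖h'‖²` alone
contributes at least `‖h'‖⁻²`, and the integral over the whole line is `π ‖h'‖⁻²` (Cauchy
density). In polar coordinates `‖x‖ ^ s` is integrable near `0` in dimension `d` iff `-d < s`,
so `‖h'‖⁻²` is integrable on the ball exactly when `d ≥ 3`. -/

section RadialPower

variable {E : Type*} [NormedAddCommGroup E] [NormedSpace ℝ E] [FiniteDimensional ℝ E]
  [MeasurableSpace E] [BorelSpace E] [Nontrivial E] (μ : Measure E) [μ.IsAddHaarMeasure]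

theorem integrableOn_ball_norm_rpow_iff {r s : ℝ} (hr : 0 < r) :
    IntegrableOn (fun x : E => ‖x‖ ^ s) (ball 0 r) μ ↔ -(Module.finrank ℝ E : ℝ) < s := by
  have hdim : 1 ≤ Module.finrank ℝ E := Module.finrank_pos
  rw [integrableOn_fun_norm_addHaar μ (f := fun y => y ^ s),
    integrableOn_congr_fun (g := fun y => y ^ ((Module.finrank ℝ E - 1 : ℕ) + s))
      (fun y hy => by rw [smul_eq_mul, ← rpow_natCast, ← rpow_add hy.1]) measurableSet_Ioo,
    intervalIntegral.integrableOn_Ioo_rpow_iff hr, Nat.cast_sub hdim, Nat.cast_one]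
  constructor <;> intro h <;> linarith

theorem lintegral_ball_norm_rpow_ne_top_iff {r s : ℝ} (hr : 0 < r) :
    ∫⁻ x in ball (0 : E) r, ENNReal.ofReal (‖x‖ ^ s) ∂μ ≠ ∞ ↔
      -(Module.finrank ℝ E : ℝ) < s := by
  rw [lintegral_ofReal_ne_top_iff_integrable
    (measurable_norm.pow_const s).aestronglyMeasurable
    (ae_of_all _ fun x => rpow_nonneg (norm_nonneg x) s)]
  exact integrableOn_ball_norm_rpow_iff μ hr

end RadialPower

theorem lintegral_inv_sq_add_sq {c : ℝ} (hc : 0 < c) :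
    ∫⁻ t, ENNReal.ofReal ((t ^ 2 + c ^ 2)⁻¹) = ENNReal.ofReal (π / c) := by
  have hγ : c.toNNReal ≠ 0 := by simpa using hc
  have hpdf : ∀ t, ENNReal.ofReal ((t ^ 2 + c ^ 2)⁻¹) =
      ENNReal.ofReal (π / c) * cauchyPDF 0 c.toNNReal t := by
    intro t
    rw [cauchyPDF_def, cauchyPDFReal_def, Real.coe_toNNReal _ hc.le,
      ← ENNReal.ofReal_mul (by positivity)]
    congr 1
    field_simp
    simp
  simp_rw [hpdf]
  rw [lintegral_const_mul _ (measurable_cauchyPDF _ _), lintegral_cauchyPDF_eq_one 0 hγ, mul_one]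

theorem ofReal_inv_le_setLIntegral_inv_sq_add_sq {c ε : ℝ} (hc : 0 < c) (hcε : c ≤ ε) :
    ENNReal.ofReal c⁻¹ ≤ ∫⁻ t in Icc (-ε) ε, ENNReal.ofReal ((t ^ 2 + c ^ 2)⁻¹) :=
  calc ENNReal.ofReal c⁻¹ = ∫⁻ _ in Icc (-c) c, ENNReal.ofReal ((2 * c ^ 2)⁻¹) := by
        rw [setLIntegral_const, Real.volume_Icc, ← ENNReal.ofReal_mul (by positivity)]
        congr 1
        field_simp
        ring
    _ ≤ ∫⁻ t in Icc (-c) c, ENNReal.ofReal ((t ^ 2 + c ^ 2)⁻¹) := by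
        refine setLIntegral_mono' measurableSet_Icc fun t ht => ?_
        have : t ^ 2 ≤ c ^ 2 := sq_le_sq' ht.1 ht.2
        gcongr
        linarith
    _ ≤ ∫⁻ t in Icc (-ε) ε, ENNReal.ofReal ((t ^ 2 + c ^ 2)⁻¹) :=
        lintegral_mono_set (Icc_subset_Icc (neg_le_neg hcε) hcε)

theorem ofReal_rpow_neg_two_le_setLIntegral_inv_sq_add_pow_four {r ε : ℝ} (hr : 0 ≤ r)
    (hrε : r ^ 2 ≤ ε) :
    ENNReal.ofReal (r ^ (-2 : ℝ)) ≤ ∫⁻ t in Icc (-ε) ε, ENNReal.ofReal ((t ^ 2 + r ^ 4)⁻¹) := by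
  rcases hr.eq_or_lt with rfl | hr
  · simp
  simpa [rpow_neg hr.le, ← pow_mul] using
    ofReal_inv_le_setLIntegral_inv_sq_add_sq (by positivity) hrε

theorem setLIntegral_inv_sq_add_pow_four_le {r : ℝ} (hr : 0 < r) (ε : ℝ) :
    ∫⁻ t in Icc (-ε) ε, ENNReal.ofReal ((t ^ 2 + r ^ 4)⁻¹) ≤
      ENNReal.ofReal π * ENNReal.ofReal (r ^ (-2 : ℝ)) :=
  calc ∫⁻ t in Icc (-ε) ε, ENNReal.ofReal ((t ^ 2 + r ^ 4)⁻¹)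
      ≤ ∫⁻ t, ENNReal.ofReal ((t ^ 2 + (r ^ 2) ^ 2)⁻¹) := by
        simpa [← pow_mul] using setLIntegral_le_lintegral _ _
    _ = ENNReal.ofReal π * ENNReal.ofReal (r ^ (-2 : ℝ)) := by
        rw [lintegral_inv_sq_add_sq (by positivity), rpow_neg hr.le, rpow_two, div_eq_mul_inv,
          ENNReal.ofReal_mul pi_pos.le]

/-- The "bubble condition" integral: for all sufficiently small `ε > 0`,
`∫_{‖h'‖<ε} ∫_{|h₀|≤ε} (h₀² + ‖h'‖⁴)⁻¹ dh₀ dh'` is infinite when `d = 1, 2`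
and finite when `d ≥ 3`. -/
theorem bubble_integral_dichotomy (d : ℕ) (hd : 1 ≤ d) :
    ∃ ε₀ : ℝ, 0 < ε₀ ∧ ∀ ε : ℝ, 0 < ε → ε ≤ ε₀ →
      (((d = 1 ∨ d = 2) →
        (∫⁻ h' in Metric.ball (0 : EuclideanSpace ℝ (Fin d)) ε,
          ∫⁻ h₀ in Set.Icc (-ε) ε,
            ENNReal.ofReal ((h₀ ^ 2 + ‖h'‖ ^ 4)⁻¹)) = ⊤) ∧
      (3 ≤ d →
        (∫⁻ h' in Metric.ball (0 : EuclideanSpace ℝ (Fin d)) ε,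
          ∫⁻ h₀ in Set.Icc (-ε) ε,
            ENNReal.ofReal ((h₀ ^ 2 + ‖h'‖ ^ 4)⁻¹)) ≠ ⊤)) := by
  have : Nontrivial (EuclideanSpace ℝ (Fin d)) :=
    have : Nonempty (Fin d) := Fin.pos_iff_nonempty.mp hd
    inferInstance
  have hradial := fun ε (hε : 0 < ε) =>
    lintegral_ball_norm_rpow_ne_top_iff (volume : Measure (EuclideanSpace ℝ (Fin d)))
      (s := -2) hε
  simp only [finrank_euclideanSpace_fin, neg_lt_neg_iff] at hradial
  refine ⟨1, one_pos, fun ε hε hε1 => ⟨fun hd12 => ?_, fun hd3 => ?_⟩⟩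
  · have hdiv : ∫⁻ h' in ball (0 : EuclideanSpace ℝ (Fin d)) ε,
        ENNReal.ofReal (‖h'‖ ^ (-2 : ℝ)) = ⊤ := by
      by_contra h
      have := (hradial ε hε).mp h
      rcases hd12 with rfl | rfl <;> norm_num at this
    refine top_le_iff.mp (hdiv ▸ setLIntegral_mono' measurableSet_ball fun h' hh' => ?_)
    refine ofReal_rpow_neg_two_le_setLIntegral_inv_sq_add_pow_four (norm_nonneg h') ?_
    nlinarith [mem_ball_zero_iff.mp hh', norm_nonneg h']
  · have hfin := (hradial ε hε).mpr (by exact_mod_cast hd3)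
    refine ne_top_of_le_ne_top (ENNReal.mul_ne_top (ENNReal.ofReal_ne_top (r := π)) hfin) ?_
    rw [← lintegral_const_mul' _ _ ENNReal.ofReal_ne_top]
    exact lintegral_mono_ae <| ae_restrict_of_ae <| (volume.ae_ne 0).mono fun h' hh' =>
      setLIntegral_inv_sq_add_pow_four_le (norm_pos_iff.mpr hh') ε
end
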